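/- arXiv:0712.2371 — 15 statements merged into one kernel-verified Lean document; each statement's English description precedes it below -/
import Mathlib

section
/- Let n, K ≥ 1 and let (A_{iI}, A_{iQ})_{i=1}^K be n×n complex matrices, all unitary, with A_{1I} = I_n, satisfying the CUW conditions. Then the family (A_{iI}, A_{iQ})_{i=1}^K satisfies the SSD conditions; that is, the resulting unitary-weight code is single-symbol decodable (a CUW-SSD code). -/
open Matrix

/-- The SSD conditions on a family of weight-matrix pairs. -/
def SSDConds {n K : ℕ} (AI AQ : Fin K → Matrix (Fin n) (Fin n) ℂ) : Prop :=
  ∀ i j : Fin K, i ≠ j →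
    (AI i)ᴴ * AQ j + (AQ j)ᴴ * AI i = 0 ∧
    (AI i)ᴴ * AI j + (AI j)ᴴ * AI i = 0 ∧
    (AQ i)ᴴ * AQ j + (AQ j)ᴴ * AQ i = 0

/-- The CUW conditions on a family of weight-matrix pairs (index `⟨0,hK⟩`
plays the role of the index `1` of the paper). -/
def CUWConds {n K : ℕ} (hK : 0 < K) (AI AQ : Fin K → Matrix (Fin n) (Fin n) ℂ) : Prop :=
  AI ⟨0, hK⟩ = 1 ∧
  (∀ i : Fin K, i ≠ ⟨0, hK⟩ → (AI i)ᴴ = -(AI i)) ∧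
  (∀ i j : Fin K, i ≠ ⟨0, hK⟩ → j ≠ ⟨0, hK⟩ → i ≠ j → AI i * AI j = -(AI j * AI i)) ∧
  (AQ ⟨0, hK⟩)ᴴ = AQ ⟨0, hK⟩ ∧
  (∀ i : Fin K, i ≠ ⟨0, hK⟩ → AQ i = AQ ⟨0, hK⟩ * AI i) ∧
  (∀ j : Fin K, AQ ⟨0, hK⟩ * AI j = AI j * AQ ⟨0, hK⟩)

/-- A family of unitary weight matrices satisfying the CUW conditions satisfies
the SSD conditions: a CUW code is single-symbol decodable. -/
theorem cuw_implies_ssd {n K : ℕ} (hn : 0 < n) (hK : 0 < K)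
    (AI AQ : Fin K → Matrix (Fin n) (Fin n) ℂ)
    (hUI : ∀ i, (AI i)ᴴ * AI i = 1) (hUQ : ∀ i, (AQ i)ᴴ * AQ i = 1)
    (hCUW : CUWConds hK AI AQ) :
    SSDConds AI AQ := by

  obtain ⟨h1, h2, h3, h4, h5, h6⟩ := hCUW
  set e : Fin K := ⟨0, hK⟩ with he
  set B := AQ e with hBdef
  have hAQ : ∀ i, AQ i = B * AI i := by
    intro i
    by_cases hi : i = e
    · subst hi; rw [h1, mul_one]
    · exact h5 i hi
  have hcommH : ∀ i : Fin K, B * (AI i)ᴴ = (AI i)ᴴ * B := by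
    intro i
    by_cases hi : i = e
    · subst hi; rw [h1]; simp
    · rw [h2 i hi]; simp [h6 i]
  have key2 : ∀ i j : Fin K, i ≠ j → (AI i)ᴴ * AI j + (AI j)ᴴ * AI i = 0 := by
    intro i j hij
    by_cases hi : i = e
    · subst hi
      rw [h1]
      have hj : j ≠ e := fun h => hij (h.symm ▸ rfl) |>.elim
      rw [h2 j hj]
      simp
    · by_cases hj : j = e
      · subst hj
        rw [h1, h2 i hi]
        simp
      · rw [h2 i hi, h2 j hj, neg_mul, neg_mul, h3 i j hi hj hij]
        simp
  have aux : ∀ (C : Matrix (Fin n) (Fin n) ℂ), (∀ k : Fin K, C * (AI k)ᴴ = (AI k)ᴴ * C) →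
      ∀ i j : Fin K, i ≠ j →
      (AI i)ᴴ * (C * AI j) + ((AI j)ᴴ * C) * AI i = 0 := by
    intro C hC i j hij
    calc (AI i)ᴴ * (C * AI j) + ((AI j)ᴴ * C) * AI i
        = C * ((AI i)ᴴ * AI j) + C * ((AI j)ᴴ * AI i) := by
          rw [← mul_assoc, ← hC i, mul_assoc, ← hC j, mul_assoc]
      _ = C * ((AI i)ᴴ * AI j + (AI j)ᴴ * AI i) := by rw [mul_add]
      _ = 0 := by rw [key2 i j hij, mul_zero]
  intro i j hij
  refine ⟨?_, key2 i j hij, ?_⟩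
  · have := aux B hcommH i j hij
    rwa [hAQ j, conjTranspose_mul, h4]
  · have hBB : ∀ k : Fin K, (B * B) * (AI k)ᴴ = (AI k)ᴴ * (B * B) := by
      intro k
      rw [mul_assoc, hcommH k, ← mul_assoc, hcommH k, mul_assoc]
    have := aux (B * B) hBB i j hij
    rw [hAQ i, hAQ j, conjTranspose_mul, conjTranspose_mul, h4]
    calc (AI i)ᴴ * B * (B * AI j) + (AI j)ᴴ * B * (B * AI i)
        = (AI i)ᴴ * (B * B * AI j) + (AI j)ᴴ * (B * B) * AI i := by
          simp only [mul_assoc]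
      _ = 0 := this
end

section
/- For every integer a ≥ 1 there exist 2a−1 complex matrices B_2,…,B_{2a} of size 2^a × 2^a that are unitary, skew-Hermitian (B_iᴴ = −B_i), and pairwise anticommuting (B_iB_j = −B_jB_i for i ≠ j), i.e., a Hurwitz–Radon family, together with a 2^a × 2^a Hermitian unitary matrix P that is not a scalar multiple of the identity and commutes with every B_i (PB_i = B_iP for all i = 2,…,2a). -/
/-!
The matrices are built from a complex Clifford family: `2k + 1` pairwise anticommuting Hermitian
involutions `γᵢ` of size `2ᵏ`, obtained recursively from the Pauli matrices as
`σ_y ⊗ 1, σ_z ⊗ 1, σ_x ⊗ γᵢ`. For `k = a`, the matrices `i γ₁, …, i γ_{2a-1}` form a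
Hurwitz–Radon family, and `P = i γ_{2a} γ_{2a+1}` is a Hermitian involution commuting with each
of them. Since `P` anticommutes with `γ_{2a}`, it is not a scalar.
-/

open Matrix Complex
open scoped Kronecker

structure IsCliffordFamily {ι A : Type*} [Ring A] [StarRing A] (γ : ι → A) : Prop where
  isSelfAdjoint : ∀ i, IsSelfAdjoint (γ i)
  mul_self : ∀ i, γ i * γ i = 1
  anticomm : ∀ ⦃i j⦄, i ≠ j → γ i * γ j = -(γ j * γ i)

theorem ne_smul_one_of_mul_eq_neg {A : Type*} [Ring A] [Algebra ℂ A] {p g : A} (hp : p ≠ 0)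
    (hg : g ≠ 0) (hpg : p * g = -(g * p)) (c : ℂ) : p ≠ c • 1 := by
  rintro rfl
  have hcg : (2 : ℂ) • (c • g) = 0 := by
    rw [two_smul, ← sub_neg_eq_add, sub_eq_zero]
    simpa using hpg
  have hc : c = 0 := by simpa [smul_eq_zero, hg] using hcg
  simp [hc] at hp

namespace IsCliffordFamily

variable {ι A : Type*} [Ring A] [StarRing A] {γ : ι → A}

theorem comp (hγ : IsCliffordFamily γ) {κ : Type*} {f : κ → ι} (hf : Function.Injective f) :
    IsCliffordFamily (γ ∘ f) :=
  ⟨fun _ => hγ.isSelfAdjoint _, fun _ => hγ.mul_self _, fun _ _ hij => hγ.anticomm (hf.ne hij)⟩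

variable {u v : ι}

theorem mul_mul_self (hγ : IsCliffordFamily γ) (huv : u ≠ v) :
    γ u * γ v * (γ u * γ v) = -1 := by
  rw [mul_assoc, ← mul_assoc (γ v), hγ.anticomm huv.symm, neg_mul, mul_neg, ← mul_assoc,
    ← mul_assoc, hγ.mul_self, one_mul, hγ.mul_self]

theorem mul_mul_anticomm_left (hγ : IsCliffordFamily γ) (huv : u ≠ v) :
    γ u * γ v * γ u = -(γ u * (γ u * γ v)) := by
  rw [mul_assoc, hγ.anticomm huv.symm, mul_neg]

theorem commute_mul (hγ : IsCliffordFamily γ) {w : ι} (hwu : w ≠ u) (hwv : w ≠ v) :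
    Commute (γ u * γ v) (γ w) := by
  rw [Commute, SemiconjBy, mul_assoc, hγ.anticomm hwv.symm, mul_neg, ← mul_assoc,
    hγ.anticomm hwu.symm, neg_mul, neg_neg, mul_assoc]

variable [Algebra ℂ A]

theorem I_smul_anticomm (hγ : IsCliffordFamily γ) (huv : u ≠ v) :
    I • γ u * (I • γ v) = -(I • γ v * (I • γ u)) := by
  rw [smul_mul_smul_comm, smul_mul_smul_comm, hγ.anticomm huv, smul_neg]

theorem I_smul_mul_mul_self (hγ : IsCliffordFamily γ) (huv : u ≠ v) :
    I • (γ u * γ v) * (I • (γ u * γ v)) = 1 := by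
  rw [smul_mul_smul_comm, hγ.mul_mul_self huv, I_mul_I, neg_one_smul, neg_neg]

theorem I_smul_mul_anticomm_left (hγ : IsCliffordFamily γ) (huv : u ≠ v) :
    I • (γ u * γ v) * γ u = -(γ u * (I • (γ u * γ v))) := by
  rw [smul_mul_assoc, mul_smul_comm, hγ.mul_mul_anticomm_left huv, smul_neg]

variable [StarModule ℂ A]

theorem star_I_smul (hγ : IsCliffordFamily γ) (i : ι) : star (I • γ i) = -(I • γ i) := by
  rw [star_smul, (hγ.isSelfAdjoint i).star_eq, Complex.star_def, conj_I, neg_smul]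

theorem star_I_smul_mul_self (hγ : IsCliffordFamily γ) (i : ι) :
    star (I • γ i) * (I • γ i) = 1 := by
  rw [hγ.star_I_smul, neg_mul, smul_mul_smul_comm, hγ.mul_self, I_mul_I, neg_one_smul, neg_neg]

theorem isSelfAdjoint_I_smul_mul (hγ : IsCliffordFamily γ) (huv : u ≠ v) :
    IsSelfAdjoint (I • (γ u * γ v)) := by
  rw [IsSelfAdjoint, star_smul, star_mul, (hγ.isSelfAdjoint u).star_eq,
    (hγ.isSelfAdjoint v).star_eq, hγ.anticomm huv.symm, Complex.star_def, conj_I, neg_smul,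
    smul_neg, neg_neg]

end IsCliffordFamily

def pauli : Fin 3 → Matrix (Fin 2) (Fin 2) ℂ :=
  ![!![0, 1; 1, 0], !![0, -I; I, 0], !![1, 0; 0, -1]]

theorem isCliffordFamily_pauli : IsCliffordFamily pauli := by
  refine ⟨fun i => ?_, fun i => ?_, fun i j hij => ?_⟩
  · fin_cases i <;> ext a b <;> fin_cases a <;> fin_cases b <;> simp [pauli]
  · fin_cases i <;> ext a b <;> fin_cases a <;> fin_cases b <;>
      simp [pauli, mul_apply, Fin.sum_univ_two]
  · fin_cases i <;> fin_cases j <;> simp at hij <;> ext a b <;> fin_cases a <;> fin_cases b <;>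
      simp [pauli, mul_apply, Fin.sum_univ_two]

section Matrix

variable {ι n m : Type*} [Fintype n] [DecidableEq n] [Fintype m] [DecidableEq m]
  {γ : ι → Matrix n n ℂ}

theorem IsCliffordFamily.reindex (hγ : IsCliffordFamily γ) (e : n ≃ m) :
    IsCliffordFamily fun i => Matrix.reindex e e (γ i) := by
  have hmul (M N : Matrix n n ℂ) :
      Matrix.reindex e e M * Matrix.reindex e e N = Matrix.reindex e e (M * N) :=
    (map_mul (reindexAlgEquiv ℂ ℂ e) M N).symm
  refine ⟨fun i => IsHermitian.reindex (hγ.isSelfAdjoint i) e, fun i => ?_, fun i j hij => ?_⟩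
  · rw [hmul, hγ.mul_self]
    exact map_one (reindexAlgEquiv ℂ ℂ e)
  · rw [hmul, hmul, hγ.anticomm hij]
    exact map_neg (reindexAlgEquiv ℂ ℂ e) _

def pauliExtend (γ : ι → Matrix n n ℂ) : Fin 2 ⊕ ι → Matrix (Fin 2 × n) (Fin 2 × n) ℂ :=
  Sum.elim (fun j => pauli j.succ ⊗ₖ 1) (fun i => pauli 0 ⊗ₖ γ i)

theorem IsCliffordFamily.pauliExtend (hγ : IsCliffordFamily γ) :
    IsCliffordFamily (pauliExtend γ) := by
  have hσ := isCliffordFamily_pauli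
  have neg_kronecker (A : Matrix (Fin 2) (Fin 2) ℂ) (B : Matrix n n ℂ) :
      (-A) ⊗ₖ B = -(A ⊗ₖ B) := by
    ext; simp
  have kronecker_neg (A : Matrix (Fin 2) (Fin 2) ℂ) (B : Matrix n n ℂ) :
      A ⊗ₖ (-B) = -(A ⊗ₖ B) := by
    ext; simp
  refine ⟨?_, ?_, ?_⟩
  · rintro (j | i)
    · exact (conjTranspose_kronecker _ _).trans
        (congrArg₂ _ (hσ.isSelfAdjoint _) conjTranspose_one)
    · exact (conjTranspose_kronecker _ _).trans
        (congrArg₂ _ (hσ.isSelfAdjoint _) (hγ.isSelfAdjoint i))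
  · rintro (j | i) <;>
      simp only [_root_.pauliExtend, Sum.elim_inl, Sum.elim_inr, ← mul_kronecker_mul,
        hσ.mul_self, hγ.mul_self, mul_one, one_kronecker_one]
  · rintro (j | i) (j' | i') h <;>
      simp only [_root_.pauliExtend, Sum.elim_inl, Sum.elim_inr, ← mul_kronecker_mul, mul_one,
        one_mul]
    · rw [hσ.anticomm (by simpa using h), neg_kronecker]
    · rw [hσ.anticomm (Fin.succ_ne_zero j), neg_kronecker]
    · rw [hσ.anticomm (Fin.succ_ne_zero j').symm, neg_kronecker]
    · rw [hγ.anticomm (by simpa using h), kronecker_neg]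

end Matrix

theorem exists_isCliffordFamily (k : ℕ) :
    ∃ γ : Fin (2 * k + 1) → Matrix (Fin (2 ^ k)) (Fin (2 ^ k)) ℂ, IsCliffordFamily γ := by
  induction k with
  | zero =>
    exact ⟨fun _ => 1, fun _ => .one _, fun _ => mul_one _,
      fun i j h => absurd (Fin.ext (by omega)) h⟩
  | succ k ih =>
    obtain ⟨γ, hγ⟩ := ih
    let eι : Fin (2 * (k + 1) + 1) ≃ Fin 2 ⊕ Fin (2 * k + 1) :=
      (finCongr (by ring)).trans finSumFinEquiv.symm
    let e : Fin 2 × Fin (2 ^ k) ≃ Fin (2 ^ (k + 1)) :=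
      finProdFinEquiv.trans (finCongr (by ring))
    exact ⟨_, (hγ.pauliExtend.reindex e).comp eι.injective⟩

/-- For every `a ≥ 1` there is a Hurwitz–Radon family of `2a-1` unitary,
skew-Hermitian, pairwise anticommuting `2^a × 2^a` matrices together with a
Hermitian unitary non-scalar matrix `P` commuting with all of them. -/
theorem exists_hurwitz_radon_family_with_commuting_hermitian (a : ℕ) (ha : 1 ≤ a) :
    ∃ (B : Fin (2 * a - 1) → Matrix (Fin (2 ^ a)) (Fin (2 ^ a)) ℂ)
      (P : Matrix (Fin (2 ^ a)) (Fin (2 ^ a)) ℂ),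
      (∀ i, (B i)ᴴ * B i = 1) ∧
      (∀ i, (B i)ᴴ = -(B i)) ∧
      (∀ i j, i ≠ j → B i * B j = -(B j * B i)) ∧
      Pᴴ = P ∧
      Pᴴ * P = 1 ∧
      (¬ ∃ c : ℂ, P = c • (1 : Matrix (Fin (2 ^ a)) (Fin (2 ^ a)) ℂ)) ∧
      (∀ i, P * B i = B i * P) := by
  obtain ⟨γ, hγ⟩ := exists_isCliffordFamily a
  let u : Fin (2 * a + 1) := ⟨2 * a - 1, by omega⟩
  let v : Fin (2 * a + 1) := Fin.last _
  have huv : u ≠ v := by simp [u, v, Fin.ext_iff]; omega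
  let idx : Fin (2 * a - 1) → Fin (2 * a + 1) := Fin.castLE (by omega)
  have hidx_u (i) : idx i ≠ u := by simp [idx, u, Fin.ext_iff]; omega
  have hidx_v (i) : idx i ≠ v := by simp [idx, v, Fin.ext_iff]; omega
  have hP : IsSelfAdjoint (I • (γ u * γ v)) := hγ.isSelfAdjoint_I_smul_mul huv
  have hP_sq := hγ.I_smul_mul_mul_self huv
  refine ⟨fun i => I • γ (idx i), I • (γ u * γ v), fun i => hγ.star_I_smul_mul_self _,
    fun i => hγ.star_I_smul _, fun i j hij => hγ.I_smul_anticomm (Fin.castLE_injective _ |>.ne hij),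
    hP, ?_, ?_, fun i => ((hγ.commute_mul (hidx_u i) (hidx_v i)).smul_left I).smul_right I⟩
  · rw [← star_eq_conjTranspose, hP.star_eq, hP_sq]
  · rintro ⟨c, hc⟩
    exact ne_smul_one_of_mul_eq_neg (left_ne_zero_of_mul_eq_one hP_sq)
      (left_ne_zero_of_mul_eq_one (hγ.mul_self u)) (hγ.I_smul_mul_anticomm_left huv) c hc
end

section
/- Let a ≥ 1 and n = 2^a. Let A_1,…,A_{2a+1} be n×n complex matrices, each unitary and skew-Hermitian, pairwise anticommuting, and irreducible in the sense that every n×n complex matrix commuting with all of A_1,…,A_{2a+1} is a scalar multiple of I_n. Let k ∈ {1,…,2a+1} and let M be an n×n complex matrix such that the family obtained from (A_i) by replacing A_k with M again consists of unitary, skew-Hermitian, pairwise anticommuting matrices and again has the property that every matrix commuting with all of its members is a scalar multiple of I_n. Then M = A_k or M = −A_k. -/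
/-!
The product `Γ = A₁ ⋯ A_{2a+1}` of an odd number of pairwise anticommuting generators commutes
with each generator, since `Aⱼ` anticommutes with the `2a` other factors; by irreducibility `Γ` is
a scalar `γ`, nonzero because the `Aᵢ` are invertible. Writing `Γ = P Aₖ Q`, the same argument for
the modified family gives `P M Q = δ`, so `M = (δ / γ) Aₖ`, and `M² = Aₖ² = -1` forces the factor
to be `±1`.
-/

open Matrix

theorem List.exists_ne_of_mem_take_ofFn {α : Type*} {m : ℕ} {C : Fin m → α} {k : Fin m} {y : α}
    (hy : y ∈ (List.ofFn C).take k) : ∃ i ≠ k, C i = y := by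
  obtain ⟨j, hj, rfl⟩ := List.mem_take_iff_getElem.mp hy
  exact ⟨⟨j, by grind⟩, by grind, by simp⟩

theorem List.exists_ne_of_mem_drop_ofFn {α : Type*} {m : ℕ} {C : Fin m → α} {k : Fin m} {y : α}
    (hy : y ∈ (List.ofFn C).drop (k + 1)) : ∃ i ≠ k, C i = y := by
  obtain ⟨j, hj, rfl⟩ := List.mem_drop_iff_getElem.mp hy
  exact ⟨⟨k + 1 + j, by grind⟩, by grind, by simp⟩

section Anticommute

variable {R : Type*} [Monoid R]

theorem List.prod_ofFn_update {m : ℕ} (C : Fin m → R) (k : Fin m) (x : R) :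
    (List.ofFn (Function.update C k x)).prod =
      ((List.ofFn C).take k).prod * x * ((List.ofFn C).drop (k + 1)).prod := by
  have hset : List.ofFn (Function.update C k x) = (List.ofFn C).set k x := by
    apply List.ext_getElem <;> simp [Function.update_apply, Fin.ext_iff, List.getElem_set]
    grind
  simp [hset, List.prod_set]

theorem List.prod_ofFn_eq_take_mul_drop {m : ℕ} (C : Fin m → R) (k : Fin m) :
    (List.ofFn C).prod = ((List.ofFn C).take k).prod * C k * ((List.ofFn C).drop (k + 1)).prod := by
  simpa using List.prod_ofFn_update C k (C k)

variable [HasDistribNeg R]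

theorem mul_neg_one_pow_mul (n : ℕ) (x y : R) : x * ((-1) ^ n * y) = (-1) ^ n * (x * y) :=
  ((Commute.neg_one_left x).pow_left n).symm.left_comm y

theorem mul_list_prod_of_forall_anticommute {x : R} {l : List R}
    (h : ∀ y ∈ l, x * y = -(y * x)) : x * l.prod = (-1) ^ l.length * (l.prod * x) := by
  induction l with
  | nil => simp
  | cons y l ih =>
    rw [List.forall_mem_cons] at h
    rw [List.prod_cons, List.length_cons, pow_succ, ← mul_assoc, h.1, neg_mul, mul_assoc, ih h.2]
    simp only [mul_neg_one_pow_mul, mul_assoc, mul_neg, neg_mul, mul_one]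

theorem commute_prod_ofFn_of_anticommute {m : ℕ} (hm : Odd m) {C : Fin m → R}
    (hC : ∀ i j, i ≠ j → C i * C j = -(C j * C i)) (k : Fin m) :
    Commute (C k) (List.ofFn C).prod := by
  set P := (List.ofFn C).take k
  set Q := (List.ofFn C).drop (k + 1)
  have hanti : ∀ y, (∃ i ≠ k, C i = y) → C k * y = -(y * C k) := by
    rintro _ ⟨i, hi, rfl⟩
    exact hC k i hi.symm
  have hP : C k * P.prod = (-1) ^ P.length * (P.prod * C k) :=
    mul_list_prod_of_forall_anticommute fun y hy => hanti y (List.exists_ne_of_mem_take_ofFn hy)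
  have hQ : C k * Q.prod = (-1) ^ Q.length * (Q.prod * C k) :=
    mul_list_prod_of_forall_anticommute fun y hy => hanti y (List.exists_ne_of_mem_drop_ofFn hy)
  have hsign : (-1 : R) ^ P.length * (-1) ^ Q.length = 1 := by
    rw [← pow_add, Even.neg_one_pow]
    simp only [P, Q, List.length_take, List.length_drop, List.length_ofFn]
    obtain ⟨r, rfl⟩ := hm
    exact ⟨r, by omega⟩
  rw [Commute, SemiconjBy, List.prod_ofFn_eq_take_mul_drop C k]
  calc C k * (P.prod * C k * Q.prod)
      = (-1) ^ P.length * (P.prod * C k * (C k * Q.prod)) := by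
        rw [← mul_assoc, ← mul_assoc, hP]; simp only [mul_assoc]
    _ = ((-1) ^ P.length * (-1) ^ Q.length) * (P.prod * C k * Q.prod * C k) := by
        rw [hQ, mul_neg_one_pow_mul]; simp only [mul_assoc]
    _ = P.prod * C k * Q.prod * C k := by rw [hsign, one_mul]

end Anticommute

section Algebra

variable {K A : Type*} [Field K] [Ring A] [Algebra K A] [Nontrivial A]

theorem eq_smul_of_mul_mul_eq_smul_one {p a b q : A} {γ δ : K} (hp : IsUnit p) (ha : IsUnit a)
    (hq : IsUnit q) (hγ : p * a * q = γ • 1) (hδ : p * b * q = δ • 1) : b = (δ / γ) • a := by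
  have hγ0 : γ ≠ 0 := by
    rintro rfl
    rw [zero_smul] at hγ
    exact not_isUnit_zero (hγ ▸ (hp.mul ha).mul hq)
  refine hq.mul_right_cancel (hp.mul_left_cancel ?_)
  calc p * (b * q) = δ • 1 := by rw [← mul_assoc, hδ]
    _ = (δ / γ) • (p * a * q) := by rw [hγ, smul_smul, div_mul_cancel₀ _ hγ0]
    _ = p * ((δ / γ) • a * q) := by rw [smul_mul_assoc, mul_smul_comm, mul_assoc]

theorem eq_or_eq_neg_of_eq_smul_of_mul_self_eq_neg_one {a b : A} {t : K} (hb : b = t • a)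
    (haa : a * a = -1) (hbb : b * b = -1) : b = a ∨ b = -a := by
  have ht : t * t = 1 := by
    rw [hb, smul_mul_smul_comm, haa, smul_neg, neg_inj] at hbb
    exact smul_left_injective K one_ne_zero (hbb.trans (one_smul K 1).symm)
  rcases mul_self_eq_one_iff.mp ht with rfl | rfl
  · simp [hb]
  · simp [hb]

end Algebra

theorem Matrix.mul_self_eq_neg_one_of_conjTranspose_eq_neg {n α : Type*} [Fintype n]
    [DecidableEq n] [Ring α] [Star α] {U : Matrix n n α} (hs : Uᴴ = -U) (hu : Uᴴ * U = 1) : U * U = -1 := by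
  rw [hs, neg_mul] at hu
  exact neg_eq_iff_eq_neg.mp hu

theorem clifford_generator_unique_up_to_sign_general (a : ℕ)
    (A : Fin (2 * a + 1) → Matrix (Fin (2 ^ a)) (Fin (2 ^ a)) ℂ)
    (hAu : ∀ i, (A i)ᴴ * A i = 1)
    (hAs : ∀ i, (A i)ᴴ = -(A i))
    (hAa : ∀ i j, i ≠ j → A i * A j = -(A j * A i))
    (hAirr : ∀ M : Matrix (Fin (2 ^ a)) (Fin (2 ^ a)) ℂ,
      (∀ i, M * A i = A i * M) → ∃ c : ℂ, M = c • (1 : Matrix (Fin (2 ^ a)) (Fin (2 ^ a)) ℂ))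
    (k : Fin (2 * a + 1)) (M : Matrix (Fin (2 ^ a)) (Fin (2 ^ a)) ℂ)
    (hBu : ∀ i, ((Function.update A k M) i)ᴴ * (Function.update A k M) i = 1)
    (hBs : ∀ i, ((Function.update A k M) i)ᴴ = -((Function.update A k M) i))
    (hBa : ∀ i j, i ≠ j →
      (Function.update A k M) i * (Function.update A k M) j =
        -((Function.update A k M) j * (Function.update A k M) i))
    (hBirr : ∀ N : Matrix (Fin (2 ^ a)) (Fin (2 ^ a)) ℂ,
      (∀ i, N * (Function.update A k M) i = (Function.update A k M) i * N) →
        ∃ c : ℂ, N = c • (1 : Matrix (Fin (2 ^ a)) (Fin (2 ^ a)) ℂ)) :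
    M = A k ∨ M = -(A k) := by
  have hodd : Odd (2 * a + 1) := odd_two_mul_add_one a
  obtain ⟨γ, hγ⟩ := hAirr _ fun i => (commute_prod_ofFn_of_anticommute hodd hAa i).eq.symm
  obtain ⟨δ, hδ⟩ := hBirr _ fun i => (commute_prod_ofFn_of_anticommute hodd hBa i).eq.symm
  rw [List.prod_ofFn_eq_take_mul_drop A k] at hγ
  rw [List.prod_ofFn_update] at hδ
  have hunit : ∀ i, IsUnit (A i) := fun i => IsUnit.of_mul_eq_one_right _ (hAu i)
  have hunit_mem : ∀ x ∈ List.ofFn A, IsUnit x := List.forall_mem_ofFn_iff.mpr hunit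
  have hMA := eq_smul_of_mul_mul_eq_smul_one
    (List.prod_isUnit fun x hx => hunit_mem x (List.mem_of_mem_take hx)) (hunit k)
    (List.prod_isUnit fun x hx => hunit_mem x (List.mem_of_mem_drop hx)) hγ hδ
  exact eq_or_eq_neg_of_eq_smul_of_mul_self_eq_neg_one hMA
    (mul_self_eq_neg_one_of_conjTranspose_eq_neg (hAs k) (hAu k))
    (mul_self_eq_neg_one_of_conjTranspose_eq_neg (by simpa using hBs k) (by simpa using hBu k))

/-- Uniqueness (up to sign) of the replaced generator in an irreducible
representation of the generators of the Clifford algebra `CA_{2a+1}`. -/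
theorem clifford_generator_unique_up_to_sign (a : ℕ) (ha : 1 ≤ a)
    (A : Fin (2 * a + 1) → Matrix (Fin (2 ^ a)) (Fin (2 ^ a)) ℂ)
    (hAu : ∀ i, (A i)ᴴ * A i = 1)
    (hAs : ∀ i, (A i)ᴴ = -(A i))
    (hAa : ∀ i j, i ≠ j → A i * A j = -(A j * A i))
    (hAirr : ∀ M : Matrix (Fin (2 ^ a)) (Fin (2 ^ a)) ℂ,
      (∀ i, M * A i = A i * M) → ∃ c : ℂ, M = c • (1 : Matrix (Fin (2 ^ a)) (Fin (2 ^ a)) ℂ))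
    (k : Fin (2 * a + 1)) (M : Matrix (Fin (2 ^ a)) (Fin (2 ^ a)) ℂ)
    (hBu : ∀ i, ((Function.update A k M) i)ᴴ * (Function.update A k M) i = 1)
    (hBs : ∀ i, ((Function.update A k M) i)ᴴ = -((Function.update A k M) i))
    (hBa : ∀ i j, i ≠ j →
      (Function.update A k M) i * (Function.update A k M) j =
        -((Function.update A k M) j * (Function.update A k M) i))
    (hBirr : ∀ N : Matrix (Fin (2 ^ a)) (Fin (2 ^ a)) ℂ,
      (∀ i, N * (Function.update A k M) i = (Function.update A k M) i * N) →
        ∃ c : ℂ, N = c • (1 : Matrix (Fin (2 ^ a)) (Fin (2 ^ a)) ℂ)) :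
    M = A k ∨ M = -(A k) :=
  clifford_generator_unique_up_to_sign_general a A hAu hAs hAa hAirr k M hBu hBs hBa hBirr
end

section
/- Let a ≥ 1, n = 2^a, and K ≥ 1. Suppose (A_{iI}, A_{iQ})_{i=1}^K are n×n complex matrices, all unitary, with A_{1I} = I_n, satisfying the SSD conditions, and suppose that for every i there is no real number c with A_{iQ} = c·A_{iI}. Then K ≤ 2a. Equivalently, the rate K/2^a of any 2^a × 2^a unitary-weight single-symbol-decodable code is at most a/2^{a−1}. -/
open Matrix

/-!
Suppose `K > 2a` and put `G j = I • A_{jI}`, `H j = I • A_{jQ}` for `2a` indices `j` other than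
the one with `A_{jI} = 1`. Against that identity weight the SSD conditions make every other weight
skew-Hermitian, so the `G j` are pairwise anticommuting involutions, so are the `H j`, and `G k`
anticommutes with `H j` for `k ≠ j`. The `4^a` ordered monomials in the `G j` are joint
eigenvectors of the commuting conjugations `X ↦ G k * X * G k`, with pairwise distinct sign
patterns, hence a basis of the `4^a`-dimensional matrix algebra. Reading off coordinates, anything
anticommuting with all `G k`, `k ≠ j`, lies in the span of `G j` and the full monomial `W`; so
`H j = α j • G j + β j • W`. Since `H j` and `H k` anticommute, `β j * β k = 0`, hence some
`H j = ± G j`, i.e. `A_{jQ} = ± A_{jI}`, contradicting non-pathology.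
-/

open Finset Module

namespace Finset

variable {ι : Type*} [DecidableEq ι]

lemma even_card_erase_iff (S : Finset ι) (k : ι) :
    Even #(S.erase k) ↔ (Even #S ↔ k ∉ S) := by
  by_cases hk : k ∈ S
  · rw [← card_erase_add_one hk, Nat.even_add_one]
    tauto
  · rw [erase_eq_of_notMem hk]
    tauto

variable [Fintype ι]

lemma odd_card_univ_erase (hι : Even (Fintype.card ι)) (k : ι) : Odd #(univ.erase k) := by
  rw [← Nat.not_even_iff_odd, even_card_erase_iff, card_univ]
  simp [hι]

lemma eq_of_forall_even_card_erase_iff (hι : Even (Fintype.card ι)) {S T : Finset ι}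
    (h : ∀ k, Even #(S.erase k) ↔ Even #(T.erase k)) : S = T := by
  simp only [even_card_erase_iff] at h
  by_cases hST : Even #S ↔ Even #T
  · ext k
    have := h k
    tauto
  · have hT : T = Sᶜ := by
      ext k
      have := h k
      rw [mem_compl]
      tauto
    rw [← card_add_card_compl S, Nat.even_add, ← hT] at hι
    exact absurd hι hST

lemma eq_singleton_or_eq_univ_of_odd_card_erase (hι : Even (Fintype.card ι)) {S : Finset ι}
    {j : ι} (h : ∀ k ≠ j, Odd #(S.erase k)) : S = {j} ∨ S = univ := by
  rcases Nat.even_or_odd #(S.erase j) with hj | hj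
  · refine Or.inl (eq_of_forall_even_card_erase_iff hι fun k => ?_)
    by_cases hkj : k = j
    · simp [hkj, hj]
    · simp [erase_eq_of_notMem (mt mem_singleton.1 hkj), Nat.not_even_iff_odd.2 (h k hkj)]
  · refine Or.inr (eq_of_forall_even_card_erase_iff hι fun k => ?_)
    have hk : Odd #(S.erase k) := if hkj : k = j then hkj ▸ hj else h k hkj
    simp only [Nat.not_even_iff_odd.2 hk, Nat.not_even_iff_odd.2 (odd_card_univ_erase hι k)]

lemma injective_neg_one_pow_card_erase {R : Type*} [Monoid R] [HasDistribNeg R]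
    (h : (-1 : R) ≠ 1) (hι : Even (Fintype.card ι)) :
    Function.Injective fun (S : Finset ι) (k : ι) => (-1 : R) ^ #(S.erase k) := by
  intro S T hST
  refine eq_of_forall_even_card_erase_iff hι fun k => ?_
  have hk : (-1 : R) ^ #(S.erase k) = (-1) ^ #(T.erase k) := congrFun hST k
  rw [← neg_one_pow_eq_one_iff_even h, hk, neg_one_pow_eq_one_iff_even h]

end Finset

lemma List.mul_prod_map_eq_smul {R A κ : Type*} [CommSemiring R] [Semiring A] [Algebra R A]
    (g : A) (f : κ → A) (s : κ → R) (l : List κ) (h : ∀ i ∈ l, g * f i = s i • (f i * g)) :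
    g * (l.map f).prod = (l.map s).prod • ((l.map f).prod * g) := by
  induction l with
  | nil => simp
  | cons i l ih =>
    rw [List.forall_mem_cons] at h
    rw [List.map_cons, List.map_cons, List.prod_cons, List.prod_cons, ← mul_assoc, h.1,
      smul_mul_assoc, mul_assoc, ih h.2, mul_smul_comm, smul_smul, mul_assoc]

lemma Module.Basis.repr_apply_eq_mul_of_apply_eq_smul {R M κ : Type*} [CommSemiring R]
    [AddCommMonoid M] [Module R M] (b : Basis κ R M) (f : M →ₗ[R] M) (μ : κ → R)
    (h : ∀ i, f (b i) = μ i • b i) (x : M) (i : κ) :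
    b.repr (f x) i = μ i * b.repr x i := by
  have : (b.coord i).comp f = μ i • b.coord i := b.ext fun l => by
    classical
    simp +contextual [h, Finsupp.single_apply]
  exact congrArg (· x) this

variable {𝕜 A ι : Type*} [Field 𝕜] [Ring A] [Algebra 𝕜 A]

structure IsAnticommutingInvolutions (G : ι → A) : Prop where
  mul_self : ∀ i, G i * G i = 1
  anticomm : ∀ i j, i ≠ j → G i * G j = -(G j * G i)

noncomputable def cliffordMonomial [LinearOrder ι] (G : ι → A) (S : Finset ι) : A :=
  ((S.sort (· ≤ ·)).map G).prod

namespace IsAnticommutingInvolutions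

variable {G : ι → A} (hG : IsAnticommutingInvolutions G)
include hG

lemma commute_mulLeftRight (k l : ι) :
    Commute (LinearMap.mulLeftRight 𝕜 (G k, G k)) (LinearMap.mulLeftRight 𝕜 (G l, G l)) := by
  obtain rfl | hkl := eq_or_ne k l
  · rfl
  ext X
  simp only [Module.End.mul_apply, LinearMap.mulLeftRight_apply]
  calc G k * (G l * X * G l) * G k = (G k * G l) * X * (G l * G k) := by noncomm_ring
    _ = (G l * G k) * X * (G k * G l) := by
      rw [hG.anticomm k l hkl, hG.anticomm l k hkl.symm]; noncomm_ring
    _ = G l * (G k * X * G k) * G l := by noncomm_ring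

variable [LinearOrder ι]

lemma mul_cliffordMonomial (k : ι) (S : Finset ι) :
    G k * cliffordMonomial G S = (-1 : 𝕜) ^ #(S.erase k) • (cliffordMonomial G S * G k) := by
  have hsign : ∀ i, G k * G i = (if i = k then 1 else -1 : 𝕜) • (G i * G k) := by
    intro i
    split_ifs with hik
    · rw [hik, one_smul]
    · rw [hG.anticomm k i (Ne.symm hik), neg_one_smul]
  rw [cliffordMonomial, List.mul_prod_map_eq_smul _ _ _ _ fun i _ => hsign i,
    ← List.prod_toFinset _ (sort_nodup _ _), sort_toFinset, prod_ite, prod_const_one, one_mul,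
    prod_const, filter_ne']

lemma isUnit_cliffordMonomial (S : Finset ι) : IsUnit (cliffordMonomial G S) :=
  List.prod_isUnit fun _ hx => by
    obtain ⟨i, -, rfl⟩ := List.mem_map.1 hx
    exact ⟨⟨G i, G i, hG.mul_self i, hG.mul_self i⟩, rfl⟩

lemma mulLeftRight_cliffordMonomial (k : ι) (S : Finset ι) :
    LinearMap.mulLeftRight 𝕜 (G k, G k) (cliffordMonomial G S) =
      (-1 : 𝕜) ^ #(S.erase k) • cliffordMonomial G S := by
  rw [LinearMap.mulLeftRight_apply, hG.mul_cliffordMonomial (𝕜 := 𝕜), smul_mul_assoc, mul_assoc,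
    hG.mul_self, mul_one]

variable [Fintype ι]

theorem linearIndependent_cliffordMonomial [Nontrivial A] (h𝕜 : ringChar 𝕜 ≠ 2)
    (hι : Even (Fintype.card ι)) : LinearIndependent 𝕜 (cliffordMonomial G) := by
  let conj (k : ι) : End 𝕜 A := LinearMap.mulLeftRight 𝕜 (G k, G k)
  have hindep := End.independent_iInf_maxGenEigenspace_of_forall_mapsTo conj
    fun k l μ => End.mapsTo_maxGenEigenspace_of_comm (hG.commute_mulLeftRight l k) μ
  have hsign := injective_neg_one_pow_card_erase (Ring.neg_one_ne_one_of_char_ne_two h𝕜) hι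
  refine (hindep.comp hsign).linearIndependent _ (fun S => ?_)
    fun S => (hG.isUnit_cliffordMonomial S).ne_zero
  refine Submodule.mem_iInf _ |>.2 fun k => End.eigenspace_le_maxGenEigenspace ?_
  exact End.mem_eigenspace_iff.2 (hG.mulLeftRight_cliffordMonomial k S)

theorem eq_smul_add_smul_of_anticomm (h𝕜 : ringChar 𝕜 ≠ 2) (hι : Even (Fintype.card ι))
    (hA : finrank 𝕜 A = 2 ^ Fintype.card ι) (j : ι) {X : A}
    (hX : ∀ k ≠ j, G k * X = -(X * G k)) :
    ∃ α β : 𝕜, X = α • G j + β • cliffordMonomial G univ := by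
  have : Nontrivial A := nontrivial_of_finrank_pos (by rw [hA]; positivity)
  let B := basisOfLinearIndependentOfCardEqFinrank (hG.linearIndependent_cliffordMonomial h𝕜 hι)
    (by rw [Fintype.card_finset, hA])
  have hB : ⇑B = cliffordMonomial G := coe_basisOfLinearIndependentOfCardEqFinrank _ _
  have hsupp : ∀ S, B.repr X S ≠ 0 → S = {j} ∨ S = univ := by
    intro S hS
    refine eq_singleton_or_eq_univ_of_odd_card_erase hι fun k hk => ?_
    have hconj : LinearMap.mulLeftRight 𝕜 (G k, G k) X = -X := by
      rw [LinearMap.mulLeftRight_apply, hX k hk, neg_mul, mul_assoc, hG.mul_self, mul_one]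
    have hrepr := B.repr_apply_eq_mul_of_apply_eq_smul (LinearMap.mulLeftRight 𝕜 (G k, G k)) _
      (fun S => by rw [hB]; exact hG.mulLeftRight_cliffordMonomial k S) X S
    rw [hconj, map_neg, Finsupp.neg_apply, ← neg_one_mul] at hrepr
    rw [← neg_one_pow_eq_neg_one_iff_odd (Ring.neg_one_ne_one_of_char_ne_two h𝕜)]
    exact (mul_right_cancel₀ hS hrepr).symm
  have hzero : ∀ S, S ≠ {j} ∧ S ≠ univ → B.repr X S • B S = 0 := fun S hS => by
    by_contra h
    exact (hsupp S (left_ne_zero_of_smul h)).elim hS.1 hS.2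
  have hj : ({j} : Finset ι) ≠ univ := fun h => by
    rw [← card_univ, ← h, card_singleton] at hι
    exact Nat.not_even_one hι
  refine ⟨B.repr X {j}, B.repr X univ, ?_⟩
  conv_lhs => rw [← B.sum_repr X]
  rw [Fintype.sum_eq_add _ _ hj hzero, hB, cliffordMonomial, sort_singleton]
  simp

theorem exists_eq_or_eq_neg [Nontrivial ι] (h𝕜 : ringChar 𝕜 ≠ 2) (hι : Even (Fintype.card ι))
    (hA : finrank 𝕜 A = 2 ^ Fintype.card ι) {H : ι → A} (hH : IsAnticommutingInvolutions H)
    (hGH : ∀ j, ∀ k ≠ j, G k * H j = -(H j * G k)) : ∃ j, H j = G j ∨ H j = -G j := by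
  have : Nontrivial A := nontrivial_of_finrank_pos (by rw [hA]; positivity)
  choose α β hHαβ using fun j => hG.eq_smul_add_smul_of_anticomm h𝕜 hι hA j (hGH j)
  set W := cliffordMonomial G univ
  have hGW : ∀ k, G k * W = -(W * G k) := fun k => by
    rw [hG.mul_cliffordMonomial (𝕜 := 𝕜), (odd_card_univ_erase hι k).neg_one_pow, neg_one_smul]
  -- in `H j * H k + H k * H j` only the `W * W` terms survive, and `W` is a unit
  have hβ : ∀ j k, j ≠ k → β j * β k = 0 := fun j k hjk => by
    have hanti : H j * H k + H k * H j = (2 * (β j * β k)) • (W * W) := by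
      rw [hHαβ j, hHαβ k]
      simp only [add_mul, mul_add, smul_mul_assoc, mul_smul_comm,
        hG.anticomm j k hjk, hGW j, hGW k]
      module
    rw [hH.anticomm j k hjk, neg_add_cancel, eq_comm, smul_eq_zero] at hanti
    have hWW : W * W ≠ 0 := ((hG.isUnit_cliffordMonomial univ).mul
      (hG.isUnit_cliffordMonomial univ)).ne_zero
    simpa [Ring.two_ne_zero h𝕜, hWW] using hanti
  obtain ⟨j, hj⟩ : ∃ j, β j = 0 := by
    obtain ⟨j, k, hjk⟩ := exists_pair_ne ι
    rcases mul_eq_zero.1 (hβ j k hjk) with h | h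
    exacts [⟨j, h⟩, ⟨k, h⟩]
  have hHj : H j = α j • G j := by rw [hHαβ j, hj, zero_smul, add_zero]
  have hα : α j * α j = 1 := by
    have h := hH.mul_self j
    rw [hHj, smul_mul_smul_comm, hG.mul_self, ← Algebra.algebraMap_eq_smul_one,
      ← map_one (algebraMap 𝕜 A)] at h
    exact (algebraMap 𝕜 A).injective h
  refine ⟨j, ?_⟩
  rcases mul_self_eq_one_iff.1 hα with h | h
  · exact Or.inl (by rw [hHj, h, one_smul])
  · exact Or.inr (by rw [hHj, h, neg_one_smul])

end IsAnticommutingInvolutions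

section SkewHermitian

variable {n : Type*} [Fintype n] [DecidableEq n] {X Y : Matrix n n ℂ}

lemma Matrix.I_smul_mul_self_of_skew_of_unitary (hX : Xᴴ = -X) (hU : Xᴴ * X = 1) :
    (Complex.I • X) * (Complex.I • X) = 1 := by
  rw [hX, neg_mul, neg_eq_iff_eq_neg] at hU
  rw [smul_mul_smul_comm, Complex.I_mul_I, hU, neg_one_smul, neg_neg]

lemma Matrix.I_smul_anticomm_of_skew (hX : Xᴴ = -X) (hY : Yᴴ = -Y)
    (h : Xᴴ * Y + Yᴴ * X = 0) :
    (Complex.I • X) * (Complex.I • Y) = -((Complex.I • Y) * (Complex.I • X)) := by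
  rw [hX, hY, neg_mul, neg_mul, ← neg_add, neg_eq_zero, add_eq_zero_iff_eq_neg] at h
  rw [smul_mul_smul_comm, smul_mul_smul_comm, h, smul_neg]

end SkewHermitian

namespace SSDConds

variable {m K : ℕ} {AI AQ : Fin K → Matrix (Fin m) (Fin m) ℂ} (hSSD : SSDConds AI AQ)
  {i₀ : Fin K} (h1 : AI i₀ = 1)
include hSSD h1

lemma conjTranspose_AI_eq_neg {i : Fin K} (hi : i ≠ i₀) : (AI i)ᴴ = -AI i := by
  have h := (hSSD i i₀ hi).2.1
  rw [h1, conjTranspose_one, mul_one, one_mul] at h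
  exact eq_neg_of_add_eq_zero_left h

lemma conjTranspose_AQ_eq_neg {i : Fin K} (hi : i ≠ i₀) : (AQ i)ᴴ = -AQ i := by
  have h := (hSSD i₀ i hi.symm).1
  rw [h1, conjTranspose_one, mul_one, one_mul] at h
  exact eq_neg_of_add_eq_zero_right h

theorem exists_AQ_eq_or_eq_neg (hUI : ∀ i, (AI i)ᴴ * AI i = 1) (hUQ : ∀ i, (AQ i)ᴴ * AQ i = 1)
    {ι : Type*} [Fintype ι] [LinearOrder ι] [Nontrivial ι] (hι : Even (Fintype.card ι))
    (hm : m * m = 2 ^ Fintype.card ι) (e : ι ↪ Fin K) (he : ∀ j, e j ≠ i₀) :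
    ∃ j, AQ (e j) = AI (e j) ∨ AQ (e j) = -AI (e j) := by
  have hI j := hSSD.conjTranspose_AI_eq_neg h1 (he j)
  have hQ j := hSSD.conjTranspose_AQ_eq_neg h1 (he j)
  have hG : IsAnticommutingInvolutions fun j => Complex.I • AI (e j) :=
    ⟨fun j => I_smul_mul_self_of_skew_of_unitary (hI j) (hUI _), fun j k hjk =>
      I_smul_anticomm_of_skew (hI j) (hI k) (hSSD _ _ (e.injective.ne hjk)).2.1⟩
  have hH : IsAnticommutingInvolutions fun j => Complex.I • AQ (e j) :=
    ⟨fun j => I_smul_mul_self_of_skew_of_unitary (hQ j) (hUQ _), fun j k hjk =>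
      I_smul_anticomm_of_skew (hQ j) (hQ k) (hSSD _ _ (e.injective.ne hjk)).2.2⟩
  obtain ⟨j, hj⟩ := hG.exists_eq_or_eq_neg (𝕜 := ℂ) (by simp) hι
    (by rw [finrank_matrix, Fintype.card_fin, finrank_self, mul_one, hm]) hH
    fun j k hkj => I_smul_anticomm_of_skew (hI k) (hQ j) (hSSD _ _ (e.injective.ne hkj)).1
  refine ⟨j, hj.imp (fun h => smul_right_injective _ Complex.I_ne_zero h) fun h => ?_⟩
  exact smul_right_injective _ Complex.I_ne_zero (h.trans (smul_neg _ _).symm)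

end SSDConds

lemma div_two_pow_le_of_le_two_mul {K a : ℕ} (ha : 1 ≤ a) (hK : K ≤ 2 * a) :
    (K : ℝ) / 2 ^ a ≤ a / 2 ^ (a - 1) := by
  obtain ⟨b, rfl⟩ := Nat.exists_eq_add_of_le' ha
  rw [Nat.add_sub_cancel, pow_succ', ← div_div]
  gcongr
  rw [div_le_iff₀ two_pos]
  exact_mod_cast hK.trans_eq (mul_comm _ _)

/-- Upper bound on the rate of a `2^a × 2^a` unitary-weight SSD code: the
number `K` of complex variables is at most `2a`, i.e. the rate `K/2^a` is at
most `a/2^(a-1)`. -/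
theorem uw_ssd_rate_upper_bound (a : ℕ) (ha : 1 ≤ a) {K : ℕ} (hK : 0 < K)
    (AI AQ : Fin K → Matrix (Fin (2 ^ a)) (Fin (2 ^ a)) ℂ)
    (hUI : ∀ i, (AI i)ᴴ * AI i = 1) (hUQ : ∀ i, (AQ i)ᴴ * AQ i = 1)
    (h1 : AI ⟨0, hK⟩ = 1)
    (hSSD : SSDConds AI AQ)
    (hNP : ∀ i, ¬ ∃ c : ℝ, AQ i = (c : ℂ) • AI i) :
    K ≤ 2 * a ∧ (K : ℝ) / 2 ^ a ≤ a / 2 ^ (a - 1) := by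
  have hKa : K ≤ 2 * a := by
    by_contra! hlt
    have : Nontrivial (Fin (2 * a)) := Fin.nontrivial_iff_two_le.2 (by omega)
    let e : Fin (2 * a) ↪ Fin K := (Fin.succEmb _).trans (Fin.castLEEmb hlt)
    obtain ⟨j, hj⟩ := hSSD.exists_AQ_eq_or_eq_neg h1 hUI hUQ (by simp)
      (by rw [Fintype.card_fin, ← pow_add, two_mul]) e fun j => by simp [e, Fin.ext_iff]
    exact hNP (e j) (hj.elim (fun h => ⟨1, by simp [h]⟩) fun h => ⟨-1, by simp [h]⟩)
  exact ⟨hKa, div_two_pow_le_of_le_two_mul ha hKa⟩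
end

section
/- Let a ≥ 1 and n = 2^a. Let B_2,…,B_{2a+2} be 2a+1 complex n×n matrices that are unitary, skew-Hermitian, and pairwise anticommuting, and let C be an n×n unitary complex matrix satisfying B_iᴴ C + Cᴴ B_i = 0 for all i ∈ {2,…,2a+2}. Then C = λ·I_n for some complex number λ. (Hence no unitary-weight SSD code on 2^a antennas can have K = 2a+2 complex variables, since the non-pathology requirement is violated.) -/
open Matrix Module

set_option maxHeartbeats 1000000

private lemma scalar_of_finrank_le_one {V : Type} [AddCommGroup V] [Module ℂ V]
    [FiniteDimensional ℂ V] (h : finrank ℂ V ≤ 1) (M : Module.End ℂ V) :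
    ∃ lam : ℂ, M = lam • (1 : Module.End ℂ V) := by
  by_cases hV : ∀ v : V, v = 0
  · exact ⟨0, by ext v; simp [hV v, hV (M v)]⟩
  · push_neg at hV
    obtain ⟨v, hv⟩ := hV
    have hspan : Submodule.span ℂ {v} = ⊤ := by
      apply Submodule.eq_top_of_finrank_eq
      have h1 : finrank ℂ (Submodule.span ℂ {v}) = 1 := finrank_span_singleton hv
      have h2 : finrank ℂ (Submodule.span ℂ {v}) ≤ finrank ℂ V := Submodule.finrank_le _
      omega
    obtain ⟨c, hc⟩ := Submodule.mem_span_singleton.mp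
      (hspan ▸ Submodule.mem_top : M v ∈ Submodule.span ℂ {v})
    refine ⟨c, ?_⟩
    ext w
    obtain ⟨d, hd⟩ := Submodule.mem_span_singleton.mp
      (hspan ▸ Submodule.mem_top : w ∈ Submodule.span ℂ {v})
    subst hd
    simp [_root_.map_smul, ← hc, smul_smul, mul_comm]

private lemma clifford_comm_scalar (a : ℕ) :
    ∀ (V : Type) [AddCommGroup V] [Module ℂ V] [FiniteDimensional ℂ V],
      finrank ℂ V ≤ 2 ^ a →
      ∀ G : Fin (2 * a) → Module.End ℂ V,
        (∀ i, G i * G i = -1) →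
        (∀ i j, i ≠ j → G i * G j = -(G j * G i)) →
        ∀ M : Module.End ℂ V, (∀ i, M * G i = G i * M) →
          ∃ lam : ℂ, M = lam • (1 : Module.End ℂ V) := by
  induction a with
  | zero =>
      intro V _ _ _ hdim G _ _ M _
      exact scalar_of_finrank_le_one (by simpa using hdim) M
  | succ b ih =>
      intro V _ _ _ hdim G hG2 hGa M hM
      set p : Fin (2 * (b + 1)) := ⟨2 * b, by omega⟩ with hp
      set q : Fin (2 * (b + 1)) := ⟨2 * b + 1, by omega⟩ with hq
      have hpq : p ≠ q := by simp [hp, hq, Fin.ext_iff]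
      set K : Module.End ℂ V := Complex.I • (G q * G p) with hKdef
      have h1 : G p * G q = -(G q * G p) := hGa p q hpq
      have hKK : K * K = 1 := by
        have e1 : (G q * G p) * (G q * G p) = -1 := by
          have e2 : (G q * G p) * (G q * G p) = G q * (G p * G q) * G p := by noncomm_ring
          rw [e2, h1]
          have e3 : G q * -(G q * G p) * G p = -((G q * G q) * (G p * G p)) := by noncomm_ring
          rw [e3, hG2, hG2]
          noncomm_ring
        rw [hKdef, smul_mul_smul_comm, e1, Complex.I_mul_I]
        simp
      have hKKv : ∀ v : V, K (K v) = v := fun v => by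
        have := DFunLike.congr_fun hKK v
        simpa [Module.End.mul_apply] using this
      set Vp := LinearMap.ker (K - 1) with hVp
      set Vm := LinearMap.ker (K + 1) with hVm
      have memp : ∀ v : V, v ∈ Vp ↔ K v = v := by
        intro v
        simp [hVp, LinearMap.mem_ker, LinearMap.sub_apply, sub_eq_zero]
      have memm : ∀ v : V, v ∈ Vm ↔ K v = -v := by
        intro v
        simp [hVm, LinearMap.mem_ker, LinearMap.add_apply, add_eq_zero_iff_eq_neg]
      -- embedding of Fin (2*b)
      set emb : Fin (2 * b) → Fin (2 * (b + 1)) := fun j => ⟨j.1, by omega⟩ with hemb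
      have hne_p : ∀ j : Fin (2 * b), emb j ≠ p := by
        intro j
        simp only [hemb, hp, ne_eq, Fin.mk.injEq]
        omega
      have hne_q : ∀ j : Fin (2 * b), emb j ≠ q := by
        intro j
        simp only [hemb, hq, ne_eq, Fin.mk.injEq]
        omega
      have hcommE : ∀ j : Fin (2 * b), G (emb j) * (G q * G p) = (G q * G p) * G (emb j) := by
        intro j
        have h1' := hGa (emb j) q (hne_q j)
        have h2' := hGa (emb j) p (hne_p j)
        calc G (emb j) * (G q * G p) = (G (emb j) * G q) * G p := by noncomm_ring
          _ = -(G q * G (emb j)) * G p := by rw [h1']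
          _ = -(G q * (G (emb j) * G p)) := by noncomm_ring
          _ = -(G q * -(G p * G (emb j))) := by rw [h2']
          _ = (G q * G p) * G (emb j) := by noncomm_ring
      have hcommK : ∀ j : Fin (2 * b), G (emb j) * K = K * G (emb j) := by
        intro j
        rw [hKdef, mul_smul_comm, smul_mul_assoc, hcommE]
      have hMK : M * K = K * M := by
        have e1 : M * (G q * G p) = (G q * G p) * M := by
          calc M * (G q * G p) = (M * G q) * G p := by noncomm_ring
            _ = G q * (M * G p) := by rw [hM q]; noncomm_ring
            _ = (G q * G p) * M := by rw [hM p]; noncomm_ring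
        rw [hKdef, mul_smul_comm, smul_mul_assoc, e1]
      have hswap : G p * K = -(K * G p) := by
        have e1 : G p * (G q * G p) = -((G q * G p) * G p) := by
          calc G p * (G q * G p) = (G p * G q) * G p := by noncomm_ring
            _ = -(G q * G p) * G p := by rw [h1]
            _ = -((G q * G p) * G p) := by noncomm_ring
        rw [hKdef, mul_smul_comm, smul_mul_assoc, e1]
        simp
      -- pointwise versions
      have hcommKv : ∀ (j : Fin (2 * b)) (v : V), G (emb j) (K v) = K (G (emb j) v) := by
        intro j v
        have := DFunLike.congr_fun (hcommK j) v
        simpa [Module.End.mul_apply] using this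
      have hMKv : ∀ v : V, M (K v) = K (M v) := by
        intro v
        have := DFunLike.congr_fun hMK v
        simpa [Module.End.mul_apply] using this
      have hswapv : ∀ v : V, G p (K v) = -(K (G p v)) := by
        intro v
        have := DFunLike.congr_fun hswap v
        simpa [Module.End.mul_apply] using this
      have hGmapsP : ∀ j : Fin (2 * b), ∀ v ∈ Vp, G (emb j) v ∈ Vp := by
        intro j v hv
        rw [memp] at hv ⊢
        rw [← hcommKv, hv]
      have hGmapsM : ∀ j : Fin (2 * b), ∀ v ∈ Vm, G (emb j) v ∈ Vm := by
        intro j v hv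
        rw [memm] at hv ⊢
        rw [← hcommKv, hv, map_neg]
      have hMmapsP : ∀ v ∈ Vp, M v ∈ Vp := by
        intro v hv
        rw [memp] at hv ⊢
        rw [← hMKv, hv]
      have hMmapsM : ∀ v ∈ Vm, M v ∈ Vm := by
        intro v hv
        rw [memm] at hv ⊢
        rw [← hMKv, hv, map_neg]
      have hPtoM : ∀ v ∈ Vp, G p v ∈ Vm := by
        intro v hv
        rw [memp] at hv
        rw [memm]
        have := hswapv v
        rw [hv] at this
        exact neg_eq_iff_eq_neg.mp this.symm
      have hMtoP : ∀ v ∈ Vm, G p v ∈ Vp := by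
        intro v hv
        rw [memm] at hv
        rw [memp]
        have h2 := hswapv v
        rw [hv, map_neg] at h2
        exact (neg_injective h2).symm
      have hGpinj : ∀ v : V, G p v = 0 → v = 0 := by
        intro v hv
        have := DFunLike.congr_fun (hG2 p) v
        simp only [Module.End.mul_apply, LinearMap.neg_apply, Module.End.one_apply] at this
        rw [hv, map_zero] at this
        simpa using this.symm
      -- equal finranks
      have hfr : finrank ℂ Vp = finrank ℂ Vm := by
        have hle1 : finrank ℂ Vp ≤ finrank ℂ Vm := by
          apply LinearMap.finrank_le_finrank_of_injective (f := (G p).restrict hPtoM)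
          intro x y hxy
          have hval : G p (x : V) = G p (y : V) := congrArg Subtype.val hxy
          have : G p ((x : V) - (y : V)) = 0 := by rw [map_sub, hval, sub_self]
          have := hGpinj _ this
          exact Subtype.ext (sub_eq_zero.mp this)
        have hle2 : finrank ℂ Vm ≤ finrank ℂ Vp := by
          apply LinearMap.finrank_le_finrank_of_injective (f := (G p).restrict hMtoP)
          intro x y hxy
          have hval : G p (x : V) = G p (y : V) := congrArg Subtype.val hxy
          have : G p ((x : V) - (y : V)) = 0 := by rw [map_sub, hval, sub_self]
          have := hGpinj _ this
          exact Subtype.ext (sub_eq_zero.mp this)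
        omega
      -- disjointness and dimension bound
      have hdisj : Vp ⊓ Vm = ⊥ := by
        rw [Submodule.eq_bot_iff]
        intro v hv
        have e1 : K v = v := (memp v).mp hv.1
        have e2 : K v = -v := (memm v).mp hv.2
        have e3 : v = -v := e1.symm.trans e2
        have e4 : (2 : ℂ) • v = 0 := by
          rw [two_smul]
          nth_rewrite 2 [e3]
          simp
        simpa using (smul_eq_zero.mp e4).resolve_left (by norm_num)
      have hdim2 : finrank ℂ Vp ≤ 2 ^ b := by
        have hsum := Submodule.finrank_sup_add_finrank_inf_eq Vp Vm
        rw [hdisj] at hsum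
        have hb0 : finrank ℂ (⊥ : Submodule ℂ V) = 0 := finrank_bot ℂ V
        have hsup : finrank ℂ ↥(Vp ⊔ Vm) ≤ finrank ℂ V := Submodule.finrank_le _
        have hpow : (2 : ℕ) ^ (b + 1) = 2 * 2 ^ b := by ring
        omega
      -- restricted operators on Vp and Vm
      set GP : Fin (2 * b) → Module.End ℂ Vp := fun j => (G (emb j)).restrict (hGmapsP j)
        with hGP
      set GM : Fin (2 * b) → Module.End ℂ Vm := fun j => (G (emb j)).restrict (hGmapsM j)
        with hGM
      have hembinj : ∀ i j : Fin (2 * b), i ≠ j → emb i ≠ emb j := by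
        intro i j hij h
        exact hij (by simpa [hemb, Fin.ext_iff] using h)
      have hGP2 : ∀ j, GP j * GP j = -1 := by
        intro j
        refine LinearMap.ext fun x => Subtype.ext ?_
        have h := DFunLike.congr_fun (hG2 (emb j)) (x : V)
        simp only [Module.End.mul_apply, LinearMap.neg_apply, Module.End.one_apply] at h
        simp [hGP, Module.End.mul_apply, LinearMap.restrict_apply, h]
      have hGM2 : ∀ j, GM j * GM j = -1 := by
        intro j
        refine LinearMap.ext fun x => Subtype.ext ?_
        have h := DFunLike.congr_fun (hG2 (emb j)) (x : V)
        simp only [Module.End.mul_apply, LinearMap.neg_apply, Module.End.one_apply] at h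
        simp [hGM, Module.End.mul_apply, LinearMap.restrict_apply, h]
      have hGPa : ∀ i j, i ≠ j → GP i * GP j = -(GP j * GP i) := by
        intro i j hij
        refine LinearMap.ext fun x => Subtype.ext ?_
        have h := DFunLike.congr_fun (hGa (emb i) (emb j) (hembinj i j hij)) (x : V)
        simp only [Module.End.mul_apply, LinearMap.neg_apply] at h
        simp [hGP, Module.End.mul_apply, LinearMap.restrict_apply, h]
      have hGMa : ∀ i j, i ≠ j → GM i * GM j = -(GM j * GM i) := by
        intro i j hij
        refine LinearMap.ext fun x => Subtype.ext ?_
        have h := DFunLike.congr_fun (hGa (emb i) (emb j) (hembinj i j hij)) (x : V)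
        simp only [Module.End.mul_apply, LinearMap.neg_apply] at h
        simp [hGM, Module.End.mul_apply, LinearMap.restrict_apply, h]
      set MP : Module.End ℂ Vp := M.restrict hMmapsP with hMP
      set MM : Module.End ℂ Vm := M.restrict hMmapsM with hMM
      have hMPc : ∀ i, MP * GP i = GP i * MP := by
        intro i
        refine LinearMap.ext fun x => Subtype.ext ?_
        have h := DFunLike.congr_fun (hM (emb i)) (x : V)
        simp only [Module.End.mul_apply] at h
        simp [hMP, hGP, Module.End.mul_apply, LinearMap.restrict_apply, h]
      have hMMc : ∀ i, MM * GM i = GM i * MM := by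
        intro i
        refine LinearMap.ext fun x => Subtype.ext ?_
        have h := DFunLike.congr_fun (hM (emb i)) (x : V)
        simp only [Module.End.mul_apply] at h
        simp [hMM, hGM, Module.End.mul_apply, LinearMap.restrict_apply, h]
      obtain ⟨lp, hlp⟩ := ih Vp hdim2 GP hGP2 hGPa MP hMPc
      obtain ⟨lm, hlm⟩ := ih Vm (hfr ▸ hdim2) GM hGM2 hGMa MM hMMc
      have hMp : ∀ v ∈ Vp, M v = lp • v := by
        intro v hv
        have := congrArg Subtype.val (DFunLike.congr_fun hlp ⟨v, hv⟩)
        simpa [hMP, LinearMap.restrict_apply] using this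
      have hMm : ∀ v ∈ Vm, M v = lm • v := by
        intro v hv
        have := congrArg Subtype.val (DFunLike.congr_fun hlm ⟨v, hv⟩)
        simpa [hMM, LinearMap.restrict_apply] using this
      have key : ∃ lam : ℂ, (∀ v ∈ Vp, M v = lam • v) ∧ (∀ v ∈ Vm, M v = lam • v) := by
        by_cases hVpbot : Vp = ⊥
        · have hVmbot : Vm = ⊥ := by
            apply Submodule.finrank_eq_zero.mp
            rw [← hfr, hVpbot]
            exact finrank_bot ℂ V
          refine ⟨0, fun v hv => ?_, fun v hv => ?_⟩
          · rw [hVpbot] at hv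
            simp [(Submodule.mem_bot ℂ).mp hv]
          · rw [hVmbot] at hv
            simp [(Submodule.mem_bot ℂ).mp hv]
        · obtain ⟨v0, hv0mem, hv0⟩ := Vp.ne_bot_iff.mp hVpbot
          have hw : G p v0 ∈ Vm := hPtoM v0 hv0mem
          have hwne : G p v0 ≠ 0 := fun h => hv0 (hGpinj v0 h)
          have e1 : M (G p v0) = lm • G p v0 := hMm _ hw
          have e2 : M (G p v0) = lp • G p v0 := by
            have h := DFunLike.congr_fun (hM p) v0
            simp only [Module.End.mul_apply] at h
            rw [h, hMp v0 hv0mem, _root_.map_smul]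
          have : lm = lp := by
            have := e1.symm.trans e2
            exact smul_left_injective ℂ hwne this
          exact ⟨lp, hMp, this ▸ hMm⟩
      obtain ⟨lam, hlamP, hlamM⟩ := key
      refine ⟨lam, ?_⟩
      ext v
      have hwp : ((2 : ℂ)⁻¹) • (v + K v) ∈ Vp := by
        rw [memp, _root_.map_smul, map_add, hKKv, add_comm]
      have hwm : ((2 : ℂ)⁻¹) • (v - K v) ∈ Vm := by
        rw [memm, _root_.map_smul, map_sub, hKKv, ← smul_neg, neg_sub]
      have hdecomp : ((2 : ℂ)⁻¹) • (v + K v) + ((2 : ℂ)⁻¹) • (v - K v) = v := by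
        module
      calc M v = M (((2 : ℂ)⁻¹) • (v + K v) + ((2 : ℂ)⁻¹) • (v - K v)) := by rw [hdecomp]
        _ = lam • (((2 : ℂ)⁻¹) • (v + K v)) + lam • (((2 : ℂ)⁻¹) • (v - K v)) := by
            rw [map_add, hlamP _ hwp, hlamM _ hwm]
        _ = lam • v := by rw [← smul_add, hdecomp]
        _ = (lam • (1 : Module.End ℂ V)) v := by simp

/-- If `B_i`, `i = 1,…,2a+1`, are unitary skew-Hermitian pairwise anticommuting
`2^a × 2^a` matrices (an irreducible representation of the generators of
`CA_{2a+1}`) and `C` is unitary with `B_iᴴ C + Cᴴ B_i = 0` for all `i`, then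
`C` is a scalar matrix. Hence a UW-SSD code on `2^a` antennas cannot have
`K = 2a + 2` complex variables. -/
theorem no_uw_ssd_with_2a_plus_2_symbols (a : ℕ) (ha : 1 ≤ a)
    (B : Fin (2 * a + 1) → Matrix (Fin (2 ^ a)) (Fin (2 ^ a)) ℂ)
    (hBu : ∀ i, (B i)ᴴ * B i = 1)
    (hBs : ∀ i, (B i)ᴴ = -(B i))
    (hBa : ∀ i j, i ≠ j → B i * B j = -(B j * B i))
    (C : Matrix (Fin (2 ^ a)) (Fin (2 ^ a)) ℂ)
    (hCu : Cᴴ * C = 1)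
    (hC : ∀ i, (B i)ᴴ * C + Cᴴ * B i = 0) :
    ∃ lam : ℂ, C = lam • (1 : Matrix (Fin (2 ^ a)) (Fin (2 ^ a)) ℂ) := by
  have hB2 : ∀ i, B i * B i = -1 := by
    intro i
    have h := hBu i
    rw [hBs i, neg_mul] at h
    have := congrArg Neg.neg h
    simpa using this
  have hCB : ∀ i, Cᴴ * B i = B i * C := by
    intro i
    have h := hC i
    rw [hBs i, neg_mul] at h
    exact (neg_add_eq_zero.mp h).symm
  have hCC : C * Cᴴ = 1 := mul_eq_one_comm.mp hCu
  have hBC : ∀ i, C * B i = B i * Cᴴ := by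
    intro i
    calc C * B i = C * B i * (C * Cᴴ) := by rw [hCC, mul_one]
      _ = C * (B i * C) * Cᴴ := by noncomm_ring
      _ = C * (Cᴴ * B i) * Cᴴ := by rw [← hCB]
      _ = (C * Cᴴ) * (B i * Cᴴ) := by noncomm_ring
      _ = B i * Cᴴ := by rw [hCC, one_mul]
  set Gm : Fin (2 * a) → Matrix (Fin (2 ^ a)) (Fin (2 ^ a)) ℂ :=
    fun j => B 0 * B j.succ with hGm
  have hsne : ∀ j : Fin (2 * a), (j.succ : Fin (2 * a + 1)) ≠ 0 := fun j => Fin.succ_ne_zero j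
  have hGm2 : ∀ j, Gm j * Gm j = -1 := by
    intro j
    have h0 : B j.succ * B 0 = -(B 0 * B j.succ) := hBa _ _ (hsne j)
    calc Gm j * Gm j = B 0 * (B j.succ * B 0) * B j.succ := by rw [hGm]; noncomm_ring
      _ = B 0 * -(B 0 * B j.succ) * B j.succ := by rw [h0]
      _ = -((B 0 * B 0) * (B j.succ * B j.succ)) := by noncomm_ring
      _ = -1 := by rw [hB2, hB2]; noncomm_ring
  have hGma : ∀ i j, i ≠ j → Gm i * Gm j = -(Gm j * Gm i) := by
    have key : ∀ i j : Fin (2 * a), Gm i * Gm j = B i.succ * B j.succ := by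
      intro i j
      have h0 : B i.succ * B 0 = -(B 0 * B i.succ) := hBa _ _ (hsne i)
      calc Gm i * Gm j = B 0 * (B i.succ * B 0) * B j.succ := by rw [hGm]; noncomm_ring
        _ = B 0 * -(B 0 * B i.succ) * B j.succ := by rw [h0]
        _ = -((B 0 * B 0) * (B i.succ * B j.succ)) := by noncomm_ring
        _ = B i.succ * B j.succ := by rw [hB2]; noncomm_ring
    intro i j hij
    have hsij : (i.succ : Fin (2 * a + 1)) ≠ j.succ := fun h => hij (Fin.succ_injective _ h)
    rw [key, key, hBa _ _ hsij]
  have hMc : ∀ j, Cᴴ * Gm j = Gm j * Cᴴ := by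
    intro j
    calc Cᴴ * Gm j = (Cᴴ * B 0) * B j.succ := by rw [hGm]; noncomm_ring
      _ = B 0 * (C * B j.succ) := by rw [hCB]; noncomm_ring
      _ = B 0 * (B j.succ * Cᴴ) := by rw [hBC]
      _ = Gm j * Cᴴ := by rw [hGm]; noncomm_ring
  -- move to endomorphisms
  set e := Matrix.toLinAlgEquiv' (R := ℂ) (n := Fin (2 ^ a)) with he
  have hdim : finrank ℂ (Fin (2 ^ a) → ℂ) ≤ 2 ^ a := le_of_eq (Module.finrank_fin_fun ℂ)
  obtain ⟨lam, hlam⟩ := clifford_comm_scalar a (Fin (2 ^ a) → ℂ) hdim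
    (fun j => e (Gm j))
    (fun j => by simp only [← _root_.map_mul, hGm2 j, map_neg, _root_.map_one])
    (fun i j hij => by simp only [← _root_.map_mul, hGma i j hij, map_neg])
    (e Cᴴ)
    (fun j => by simp only [← _root_.map_mul, hMc j])
  have hCH : Cᴴ = lam • (1 : Matrix (Fin (2 ^ a)) (Fin (2 ^ a)) ℂ) := by
    have h2 := congrArg e.symm hlam
    rw [AlgEquiv.symm_apply_apply] at h2
    rw [h2]
    simp
  refine ⟨star lam, ?_⟩
  calc C = Cᴴᴴ := (conjTranspose_conjTranspose C).symm
    _ = (lam • (1 : Matrix (Fin (2 ^ a)) (Fin (2 ^ a)) ℂ))ᴴ := by rw [hCH]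
    _ = star lam • (1 : Matrix (Fin (2 ^ a)) (Fin (2 ^ a)) ℂ) := by
        rw [conjTranspose_smul, conjTranspose_one]
end

section
/- Let a ≥ 1, n = 2^a, and K = 2a+1. Suppose (A_{iI}, A_{iQ})_{i=1}^{2a+1} are n×n complex matrices, all unitary, with A_{1I} = I_n, satisfying the SSD conditions. Then there exist an index i ∈ {2,…,2a+1} and a real number c ∈ {+1, −1} with A_{iI} = c·A_{iQ}. (Hence a 2^a × 2^a unitary-weight SSD code satisfying the non-pathology requirement cannot have K = 2a+1 complex variables.) -/
/-!
Write `B i = AI (i + 1)` and `C i = AQ (i + 1)`. The SSD conditions against `AI 0 = 1` make all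
of them skew-Hermitian, so unitarity gives `B i * B i = C i * C i = -1`, and the remaining
conditions say that the `B i` pairwise anticommute, the `C i` pairwise anticommute, and `B i`
anticommutes with `C j` for `i ≠ j`.

Since there are `2a` of the `B i` acting on a space of dimension `2^a`, only scalars commute
with all of them: `B 1` embeds the `I`-eigenspace `W` of `B 0` into the `-I`-eigenspace, so
`dim W ≤ 2^(a-1)`, and `W` carries the `2a - 2` anticommuting square roots `B k * B 1` of `-1`
(`k ≥ 2`), to which induction applies.

So the anticommutator of `B j` and `C j` is a scalar, hence `D j = C j - c j • B j` anticommutes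
with every `B i` for a suitable `c j`, and `D j * D j = c j ^ 2 - 1`. For `j ≠ k` the product
`D j * D k` is again a scalar, and as `D j` and `D k` anticommute this forces `c j ^ 2 = 1` or
`c k ^ 2 = 1`. Then `D j` is skew-Hermitian with square zero, so `D j = 0` and `C j = ± B j`.
-/

open Matrix

def Anticommute {R : Type*} [Mul R] [Neg R] (a b : R) : Prop := a * b = -(b * a)

namespace Anticommute

section Ring
variable {R : Type*} [Ring R] {a b c : R}

theorem symm (h : Anticommute a b) : Anticommute b a := by
  rw [Anticommute, h, neg_neg]

theorem sub_right (hab : Anticommute a b) (hac : Anticommute a c) : Anticommute a (b - c) := by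
  rw [Anticommute, mul_sub, sub_mul, hab, hac, neg_sub_neg, neg_sub]

theorem sub_left (hac : Anticommute a c) (hbc : Anticommute b c) : Anticommute (a - b) c :=
  (hac.symm.sub_right hbc.symm).symm

theorem smul_right {K : Type*} [CommSemiring K] [Algebra K R] (h : Anticommute a b) (k : K) :
    Anticommute a (k • b) := by
  rw [Anticommute, mul_smul_comm, smul_mul_assoc, h, smul_neg]

theorem smul_left {K : Type*} [CommSemiring K] [Algebra K R] (h : Anticommute a b) (k : K) :
    Anticommute (k • a) b :=
  (h.symm.smul_right k).symm

theorem commute_mul_right (hab : Anticommute a b) (hac : Anticommute a c) : Commute a (b * c) := by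
  calc a * (b * c) = -(b * (a * c)) := by rw [← mul_assoc, hab, neg_mul, mul_assoc]
    _ = b * c * a := by rw [hac, mul_neg, neg_neg, mul_assoc]

theorem mul_mul_self_eq (h : Anticommute a b) (ha : a * a = -1) : a * b * a = b := by
  rw [h, neg_mul, mul_assoc, ha, mul_neg_one, neg_neg]

theorem map {S F : Type*} [Ring S] [FunLike F R S] [RingHomClass F R S] (f : F)
    (h : Anticommute a b) : Anticommute (f a) (f b) := by
  rw [Anticommute, ← map_mul, h, map_neg, map_mul]

end Ring

theorem restrict {R M : Type*} [CommRing R] [AddCommGroup M] [Module R M] {f g : Module.End R M}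
    (h : Anticommute f g) {p : Submodule R M} (hf : Set.MapsTo f p p) (hg : Set.MapsTo g p p) :
    Anticommute (f.restrict hf) (g.restrict hg) := by
  ext x
  exact congr($h x)

theorem mapsTo_eigenspace {K M : Type*} [CommRing K] [AddCommGroup M] [Module K M]
    {f g : Module.End K M} (h : Anticommute f g) (μ : K) :
    Set.MapsTo g (f.eigenspace μ) (f.eigenspace (-μ)) := by
  intro x hx
  rw [SetLike.mem_coe, Module.End.mem_eigenspace_iff] at hx ⊢
  rw [← Module.End.mul_apply, h, LinearMap.neg_apply, Module.End.mul_apply, hx, map_smul,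
    neg_smul]

end Anticommute

theorem LinearMap.restrict_mul_self_eq_neg_one {R M : Type*} [CommRing R] [AddCommGroup M]
    [Module R M] {f : Module.End R M} (h : f * f = -1) {p : Submodule R M}
    (hf : Set.MapsTo f p p) : f.restrict hf * f.restrict hf = -1 := by
  ext x
  exact congr($h x)

section Algebra

variable {K R : Type*} [Field K] [Ring R] [Algebra K R]

theorem commute_mul_add_mul_of_mul_self_eq_neg_one {b : R} (hb : b * b = -1) (c : R) :
    Commute b (b * c + c * b) := by
  calc b * (b * c + c * b) = b * c * b - c := by
        rw [mul_add, ← mul_assoc, hb, neg_one_mul, mul_assoc, add_comm, sub_eq_add_neg]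
    _ = (b * c + c * b) * b := by
        rw [add_mul, mul_assoc c, hb, mul_neg_one, sub_eq_add_neg]

theorem sub_smul_mul_self_eq {b c : R} (hb : b * b = -1) (hc : c * c = -1) {k : K}
    (h : Anticommute b (c - k • b)) : (c - k • b) * (c - k • b) = (k * k - 1) • 1 := by
  rw [Anticommute, mul_sub, sub_mul, mul_smul_comm, smul_mul_assoc, hb, ← sub_eq_zero] at h
  rw [mul_sub, sub_mul, sub_mul, mul_smul_comm, smul_mul_assoc, smul_mul_assoc, mul_smul_comm,
    hb, hc]
  linear_combination (norm := module) (-k) • h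

variable [NeZero (2 : K)] {ι : Type*} {B : ι → R}

theorem exists_forall_anticommute_sub_smul (hsq : ∀ i, B i * B i = -1)
    (hB : Pairwise fun i j => Anticommute (B i) (B j))
    (hcomm : ∀ Z, (∀ i, Commute (B i) Z) → ∃ c : K, Z = c • 1) {j : ι} {C : R}
    (hC : ∀ i, i ≠ j → Anticommute (B i) C) :
    ∃ c : K, ∀ i, Anticommute (B i) (C - c • B j) := by
  obtain ⟨z, hz⟩ := hcomm (B j * C + C * B j) fun i => by
    rcases eq_or_ne i j with rfl | hij
    · exact commute_mul_add_mul_of_mul_self_eq_neg_one (hsq i) C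
    · exact ((hB hij).commute_mul_right (hC i hij)).add_right
        ((hC i hij).commute_mul_right (hB hij))
  refine ⟨-(z / 2), fun i => ?_⟩
  rcases eq_or_ne i j with rfl | hij
  · rw [Anticommute, mul_sub, sub_mul, mul_smul_comm, smul_mul_assoc, hsq, ← sub_eq_zero,
      eq_sub_of_add_eq hz]
    match_scalars <;> field_simp <;> ring
  · exact (hC i hij).sub_right ((hB hij).smul_right _)

theorem eq_zero_or_eq_zero_of_anticommute [Nontrivial R] {d e : R} {μ ν ρ : K}
    (hde : Anticommute d e) (hdd : d * d = μ • 1) (hee : e * e = ν • 1)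
    (hρ : d * e = ρ • 1) :
    μ = 0 ∨ ν = 0 := by
  have hρd : ρ • d = -(ρ • d) := by
    calc ρ • d = d * e * d := by rw [hρ, smul_mul_assoc, one_mul]
      _ = -(ρ • d) := by rw [mul_assoc, hde.symm, mul_neg, hρ, mul_smul_comm, mul_one]
  have h2ρd : (2 : K) • ρ • d = 0 := by rw [two_smul, add_eq_zero_iff_eq_neg, ← hρd]
  rcases smul_eq_zero.mp ((smul_eq_zero.mp h2ρd).resolve_left two_ne_zero) with hρ0 | hd0
  · have hμe : μ • e = 0 := by
      rw [← one_mul e, ← smul_mul_assoc, ← hdd, mul_assoc, hρ, hρ0, zero_smul, mul_zero]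
    refine (smul_eq_zero.mp hμe).imp_right fun he0 => ?_
    rw [he0, mul_zero, eq_comm, smul_eq_zero_iff_left one_ne_zero] at hee
    exact hee
  · rw [hd0, mul_zero, eq_comm, smul_eq_zero_iff_left one_ne_zero] at hdd
    exact Or.inl hdd

theorem exists_sub_smul_mul_self_eq_zero [Nontrivial R] (hsq : ∀ i, B i * B i = -1)
    (hB : Pairwise fun i j => Anticommute (B i) (B j))
    (hcomm : ∀ Z, (∀ i, Commute (B i) Z) → ∃ c : K, Z = c • 1) {C : ι → R}
    (hCsq : ∀ i, C i * C i = -1) (hC : Pairwise fun i j => Anticommute (C i) (C j))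
    (hBC : Pairwise fun i j => Anticommute (B i) (C j)) {j k : ι} (hjk : j ≠ k) :
    ∃ l, ∃ c : K, c * c = 1 ∧ (C l - c • B l) * (C l - c • B l) = 0 := by
  obtain ⟨c, hc⟩ :=
    exists_forall_anticommute_sub_smul (j := j) (C := C j) hsq hB hcomm fun _ hi => hBC hi
  obtain ⟨c', hc'⟩ :=
    exists_forall_anticommute_sub_smul (j := k) (C := C k) hsq hB hcomm fun _ hi => hBC hi
  obtain ⟨ρ, hρ⟩ := hcomm _ fun i => (hc i).commute_mul_right (hc' i)
  have hDD : Anticommute (C j - c • B j) (C k - c' • B k) :=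
    ((hC hjk).sub_right ((hBC hjk.symm).symm.smul_right c')).sub_left
      (((hBC hjk).sub_right ((hB hjk).smul_right c')).smul_left c)
  have hDj := sub_smul_mul_self_eq (hsq j) (hCsq j) (hc j)
  have hDk := sub_smul_mul_self_eq (hsq k) (hCsq k) (hc' k)
  rcases eq_zero_or_eq_zero_of_anticommute hDD hDj hDk hρ with h | h
  · exact ⟨j, c, sub_eq_zero.mp h, by rw [hDj, h, zero_smul]⟩
  · exact ⟨k, c', sub_eq_zero.mp h, by rw [hDk, h, zero_smul]⟩

end Algebra

namespace Module.End

variable {K V : Type*} [Field K] [AddCommGroup V] [Module K V]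

theorem exists_eq_smul_one_of_finrank_le_one [FiniteDimensional K V] (hV : finrank K V ≤ 1)
    (f : End K V) : ∃ c : K, f = c • 1 := by
  obtain ⟨v, hv⟩ := finrank_le_one_iff.mp hV
  obtain ⟨c, hc⟩ := hv (f v)
  refine ⟨c, LinearMap.ext fun w => ?_⟩
  obtain ⟨d, rfl⟩ := hv w
  rw [map_smul, ← hc, LinearMap.smul_apply, one_apply, smul_comm]

theorem two_mul_finrank_eigenspace_le [FiniteDimensional K V] {f g : End K V}
    (h : Anticommute f g) (hg : Function.Injective g) {μ : K} (hμ : μ ≠ -μ) :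
    2 * finrank K (f.eigenspace μ) ≤ finrank K V := by
  have hdisj : Disjoint (f.eigenspace μ) ((f.eigenspace μ).map g) :=
    (f.disjoint_genEigenspace hμ 1 1).mono_right
      (Submodule.map_le_iff_le_comap.mpr fun _ hx =>
        Submodule.mem_comap.mpr (h.mapsTo_eigenspace μ hx))
  have := Submodule.finrank_add_finrank_le_of_disjoint hdisj
  rw [← (Submodule.equivMapOfInjective g hg _).finrank_eq] at this
  omega

theorem eq_smul_one_of_eqOn_eigenspace [NeZero (2 : K)] {f g Z : End K V} {μ c : K}
    (hμ : μ * μ = -1) (hf : f * f = -1) (hg : g * g = -1) (hfg : Anticommute f g)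
    (hgZ : Commute g Z) (hZ : ∀ x ∈ f.eigenspace μ, Z x = c • x) : Z = c • 1 := by
  have hff : ∀ v, f (f v) = -v := fun v => by simpa using congr($hf v)
  have hgg : ∀ v, g (g v) = -v := fun v => by simpa using congr($hg v)
  have hp : ∀ v, v - μ • f v ∈ f.eigenspace μ := fun v => by
    rw [mem_eigenspace_iff, map_sub, map_smul, hff, smul_sub, smul_smul, hμ]
    module
  have hq : ∀ v, g (v + μ • f v) ∈ f.eigenspace μ := fun v => by
    have := hfg.mapsTo_eigenspace (-μ) (x := v + μ • f v)
    rw [neg_neg] at this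
    refine this ?_
    rw [SetLike.mem_coe, mem_eigenspace_iff, map_add, map_smul, hff, smul_add, smul_smul,
      neg_mul, hμ]
    module
  have hZq : ∀ v, Z (v + μ • f v) = c • (v + μ • f v) := fun v => by
    have := hZ _ (hq v)
    rw [← mul_apply, ← hgZ.eq, mul_apply, ← map_smul g c] at this
    exact neg_injective (by simpa only [hgg] using congr_arg g this)
  refine LinearMap.ext fun v => smul_right_injective V (two_ne_zero (α := K)) ?_
  have hv : (2 : K) • v = (v - μ • f v) + (v + μ • f v) := by module
  calc (2 : K) • Z v = Z ((v - μ • f v) + (v + μ • f v)) := by rw [← hv, map_smul]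
    _ = (2 : K) • (c • 1 : End K V) v := by
      rw [map_add, hZ _ (hp v), hZq, ← smul_add, ← hv, LinearMap.smul_apply, one_apply,
        smul_comm]

theorem exists_eq_smul_one_of_forall_commute {V : Type*} [AddCommGroup V] [Module ℂ V]
    [FiniteDimensional ℂ V] {a : ℕ} (hV : finrank ℂ V ≤ 2 ^ a)
    {B : Fin (2 * a) → End ℂ V}
    (hsq : ∀ i, B i * B i = -1) (hB : Pairwise fun i j => Anticommute (B i) (B j))
    {Z : End ℂ V} (hZ : ∀ i, Commute (B i) Z) : ∃ c : ℂ, Z = c • 1 := by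
  induction a generalizing V with
  | zero => exact exists_eq_smul_one_of_finrank_le_one hV Z
  | succ a ih =>
    have hB01 : Anticommute (B 0) (B 1) := hB (by simp)
    have hB1 : Function.Injective (B 1) := fun x y hxy => by
      simpa [← mul_apply, hsq] using congr(B 1 $hxy)
    have hW : finrank ℂ ((B 0).eigenspace Complex.I) ≤ 2 ^ a := by
      have := two_mul_finrank_eigenspace_le hB01 hB1 (μ := Complex.I)
        (by norm_num [Complex.ext_iff])
      rw [pow_succ] at hV
      omega
    set W := (B 0).eigenspace Complex.I
    set G : Fin (2 * a) → End ℂ V := fun k => B k.succ.succ * B 1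
    have hGG : ∀ k l, G k * G l = B k.succ.succ * B l.succ.succ := fun k l => by
      have hB1l : Anticommute (B 1) (B l.succ.succ) :=
        hB ((Fin.succ_injective _).ne (Fin.succ_ne_zero l).symm)
      rw [mul_assoc, ← mul_assoc (B 1), hB1l.mul_mul_self_eq (hsq 1)]
    have hGW : ∀ k, Set.MapsTo (G k) W W := fun k =>
      mapsTo_genEigenspace_of_comm ((hB (Fin.succ_ne_zero _).symm).commute_mul_right hB01) _ _
    have hZW := mapsTo_genEigenspace_of_comm (hZ 0) Complex.I 1
    obtain ⟨c, hc⟩ := ih hW (B := fun k => (G k).restrict (hGW k))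
      (fun k => LinearMap.restrict_mul_self_eq_neg_one (by rw [hGG, hsq]) _)
      (fun k l hkl =>
        Anticommute.restrict (by rw [Anticommute, hGG, hGG, hB (by simpa using hkl)]) _ _)
      (Z := Z.restrict hZW) (fun k => LinearMap.restrict_commute ((hZ _).mul_left (hZ 1)) _ _)
    exact ⟨c, eq_smul_one_of_eqOn_eigenspace Complex.I_mul_I (hsq 0) (hsq 1) hB01 (hZ 1)
      fun x hx => congr(($hc ⟨x, hx⟩ : V))⟩

end Module.End

theorem Matrix.exists_eq_smul_one_of_forall_commute {n : Type*} [Fintype n] [DecidableEq n]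
    {a : ℕ} (hn : Fintype.card n ≤ 2 ^ a) {B : Fin (2 * a) → Matrix n n ℂ}
    (hsq : ∀ i, B i * B i = -1) (hB : Pairwise fun i j => Anticommute (B i) (B j))
    {Z : Matrix n n ℂ} (hZ : ∀ i, Commute (B i) Z) : ∃ c : ℂ, Z = c • 1 := by
  obtain ⟨c, hc⟩ := Module.End.exists_eq_smul_one_of_forall_commute
    (by rwa [Module.finrank_fintype_fun_eq_card]) (B := fun i => toLinAlgEquiv' (B i))
    (fun i => by rw [← map_mul, hsq, map_neg, map_one]) (fun i j hij => (hB hij).map _)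
    (Z := toLinAlgEquiv' Z) fun i => (hZ i).map _
  exact ⟨c, toLinAlgEquiv'.injective (by rw [hc, map_smul, map_one])⟩

theorem Matrix.anticommute_of_conjTranspose_eq_neg {m α : Type*} [Fintype m] [Ring α]
    [StarRing α] {X Y : Matrix m m α} (hX : Xᴴ = -X) (hY : Yᴴ = -Y)
    (h : Xᴴ * Y + Yᴴ * X = 0) :
    Anticommute X Y := by
  rw [hX, hY, neg_mul, neg_mul, ← neg_add, neg_eq_zero] at h
  exact eq_neg_of_add_eq_zero_left h

theorem Matrix.mul_self_eq_neg_one_of_conjTranspose_eq_neg_s8 {m α : Type*} [Fintype m]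
    [DecidableEq m] [Ring α] [StarRing α] {X : Matrix m m α} (hX : Xᴴ = -X)
    (h : Xᴴ * X = 1) :
    X * X = -1 := by
  rw [hX, neg_mul] at h
  exact neg_eq_iff_eq_neg.mp h

theorem Matrix.eq_zero_of_conjTranspose_eq_neg_of_mul_self_eq_zero {m R : Type*} [Fintype m]
    [PartialOrder R] [Ring R] [StarRing R] [StarOrderedRing R] [NoZeroDivisors R]
    {D : Matrix m m R} (hD : Dᴴ = -D) (h : D * D = 0) : D = 0 :=
  conjTranspose_mul_self_eq_zero.mp (by rw [hD, neg_mul, h, neg_zero])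

namespace SSDConds

variable {n K : ℕ} {AI AQ : Fin (K + 1) → Matrix (Fin n) (Fin n) ℂ}

theorem conjTranspose_eq_neg (h : SSDConds AI AQ) (h1 : AI 0 = 1) {i : Fin (K + 1)}
    (hi : i ≠ 0) :    (AI i)ᴴ = -AI i ∧ (AQ i)ᴴ = -AQ i := by
  obtain ⟨hQ, hI, -⟩ := h 0 i hi.symm
  rw [h1, conjTranspose_one, one_mul, mul_one] at hQ hI
  exact ⟨eq_neg_of_add_eq_zero_right hI, eq_neg_of_add_eq_zero_right hQ⟩

theorem anticommute (h : SSDConds AI AQ) (h1 : AI 0 = 1) {i j : Fin (K + 1)} (hi : i ≠ 0)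
    (hj : j ≠ 0) (hij : i ≠ j) :
    Anticommute (AI i) (AI j) ∧ Anticommute (AI i) (AQ j) ∧ Anticommute (AQ i) (AQ j) := by
  obtain ⟨hIi, hQi⟩ := h.conjTranspose_eq_neg h1 hi
  obtain ⟨hIj, hQj⟩ := h.conjTranspose_eq_neg h1 hj
  obtain ⟨hIQ, hII, hQQ⟩ := h i j hij
  exact ⟨anticommute_of_conjTranspose_eq_neg hIi hIj hII,
    anticommute_of_conjTranspose_eq_neg hIi hQj hIQ,
    anticommute_of_conjTranspose_eq_neg hQi hQj hQQ⟩

end SSDConds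

/-- A `2^a × 2^a` unitary-weight SSD family with `K = 2a + 1` complex
variables necessarily violates the non-pathology requirement: some `A_{iI}`
with `i ≥ 2` equals `± A_{iQ}`. -/
theorem no_uw_ssd_with_2a_plus_1_symbols (a : ℕ) (ha : 1 ≤ a)
    (AI AQ : Fin (2 * a + 1) → Matrix (Fin (2 ^ a)) (Fin (2 ^ a)) ℂ)
    (hUI : ∀ i, (AI i)ᴴ * AI i = 1) (hUQ : ∀ i, (AQ i)ᴴ * AQ i = 1)
    (h1 : AI 0 = 1)
    (hSSD : SSDConds AI AQ) :
    ∃ i : Fin (2 * a + 1), i ≠ 0 ∧ ∃ c : ℝ, (c = 1 ∨ c = -1) ∧ AI i = (c : ℂ) • AQ i := by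
  have hskew := fun i (hi : i ≠ 0) => hSSD.conjTranspose_eq_neg h1 hi
  have hanti := fun i j (hij : i ≠ j) =>
    hSSD.anticommute h1 (Fin.succ_ne_zero i) (Fin.succ_ne_zero j) ((Fin.succ_injective _).ne hij)
  set B : Fin (2 * a) → Matrix (Fin (2 ^ a)) (Fin (2 ^ a)) ℂ := fun i => AI i.succ
  set C : Fin (2 * a) → Matrix (Fin (2 ^ a)) (Fin (2 ^ a)) ℂ := fun i => AQ i.succ
  have hBsq : ∀ i, B i * B i = -1 := fun i =>
    mul_self_eq_neg_one_of_conjTranspose_eq_neg_s8 (hskew _ i.succ_ne_zero).1 (hUI _)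
  have hBB : Pairwise fun i j => Anticommute (B i) (B j) := fun i j hij => (hanti i j hij).1
  obtain ⟨l, c, hc, hD⟩ := exists_sub_smul_mul_self_eq_zero hBsq hBB
    (fun _ hZ => Matrix.exists_eq_smul_one_of_forall_commute (by simp) hBsq hBB hZ)
    (fun i => mul_self_eq_neg_one_of_conjTranspose_eq_neg_s8 (hskew _ i.succ_ne_zero).2 (hUQ _))
    (fun i j hij => (hanti i j hij).2.2) (fun i j hij => (hanti i j hij).2.1)
    (j := ⟨0, by omega⟩) (k := ⟨1, by omega⟩) (by simp [Fin.ext_iff])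
  obtain ⟨r, hr, rfl⟩ : ∃ r : ℝ, (r = 1 ∨ r = -1) ∧ (r : ℂ) = c := by
    rcases mul_self_eq_one_iff.mp hc with rfl | rfl
    exacts [⟨1, by simp⟩, ⟨-1, by simp⟩]
  have hCl : C l = (r : ℂ) • B l := by
    refine sub_eq_zero.mp (open scoped ComplexOrder in
      eq_zero_of_conjTranspose_eq_neg_of_mul_self_eq_zero ?_ hD)
    rw [conjTranspose_sub, conjTranspose_smul, (hskew _ l.succ_ne_zero).1,
      (hskew _ l.succ_ne_zero).2, Complex.star_def, Complex.conj_ofReal, smul_neg, neg_sub_neg,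
      neg_sub]
  refine ⟨l.succ, l.succ_ne_zero, r, hr, ?_⟩
  change B l = _ • C l
  rw [hCl, smul_smul, hc, one_smul]
end

section
/- Let (A_{iI}, A_{iQ})_{i=1}^K be n×n complex matrices with A_{1I} = I_n satisfying the CUW conditions, with every A_{iI} unitary and A_{1Q} unitary. Then for all real numbers u_1,…,u_K, v_1,…,v_K, the matrix D = Σ_{i=1}^K (u_i A_{iI} + v_i A_{iQ}) satisfies DᴴD = (Σ_{i=1}^K (u_i² + v_i²))·I_n + 2·(Σ_{i=1}^K u_i v_i)·A_{1Q}. -/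
open Matrix

/-- A double sum of a family that is "antisymmetric off the diagonal"
reduces to the diagonal sum. -/
lemma cuw_sum_sum_eq_diag {β : Type*} [AddCommGroup β] {K : ℕ} (f : Fin K → Fin K → β)
    (h : ∀ i j, i ≠ j → f i j + f j i = 0) :
    ∑ i : Fin K, ∑ j : Fin K, f i j = ∑ i : Fin K, f i i := by
  rw [← Finset.sum_product', ← Finset.diag_union_offDiag,
    Finset.sum_union (Finset.disjoint_diag_offDiag _), Finset.sum_diag]
  have h0 : ∑ p ∈ Finset.univ.offDiag, f p.1 p.2 = 0 := by
    apply Finset.sum_involution (fun p _ => Prod.swap p)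
    · intro p hp
      exact h p.1 p.2 (Finset.mem_offDiag.mp hp).2.2
    · intro p hp hne hswap
      exact (Finset.mem_offDiag.mp hp).2.2 (congrArg Prod.fst hswap).symm
    · intro p hp
      rcases Finset.mem_offDiag.mp hp with ⟨-, -, hne⟩
      exact Finset.mem_offDiag.mpr ⟨Finset.mem_univ _, Finset.mem_univ _, fun h' => hne h'.symm⟩
    · intro p hp
      rfl
  rw [h0, add_zero]

/-- For a CUW family with unitary weight matrices, the Gram matrix of a
codeword difference `D = Σ (uᵢ A_{iI} + vᵢ A_{iQ})` is
`(Σ (uᵢ² + vᵢ²)) I + 2 (Σ uᵢ vᵢ) A_{1Q}`. -/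
theorem cuw_codeword_difference_gram {n K : ℕ} (hK : 0 < K)
    (AI AQ : Fin K → Matrix (Fin n) (Fin n) ℂ)
    (hUI : ∀ i, (AI i)ᴴ * AI i = 1)
    (hUQ1 : (AQ ⟨0, hK⟩)ᴴ * AQ ⟨0, hK⟩ = 1)
    (hCUW : CUWConds hK AI AQ)
    (u v : Fin K → ℝ) :
    letI D : Matrix (Fin n) (Fin n) ℂ :=
      ∑ i : Fin K, ((u i : ℂ) • AI i + (v i : ℂ) • AQ i)
    Dᴴ * D = ((∑ i : Fin K, (u i ^ 2 + v i ^ 2) : ℝ) : ℂ) • (1 : Matrix (Fin n) (Fin n) ℂ)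
      + ((2 * ∑ i : Fin K, u i * v i : ℝ) : ℂ) • AQ ⟨0, hK⟩ := by
  obtain ⟨h1, hskew, hanti, hQH, hAQi, hcomm⟩ := hCUW
  set Q := AQ ⟨0, hK⟩ with hQdefQ
  have hQ2 : Q * Q = 1 := by rw [← hUQ1, hQH]
  have hAQ : ∀ i, AQ i = Q * AI i := by
    intro i
    by_cases hi : i = ⟨0, hK⟩
    · subst hi; rw [h1, mul_one]
    · exact hAQi i hi
  -- antisymmetry of M i j = (AI i)ᴴ * AI j off the diagonal
  have hM : ∀ i j, i ≠ j → (AI i)ᴴ * AI j + (AI j)ᴴ * AI i = 0 := by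
    intro i j hij
    by_cases hi : i = ⟨0, hK⟩
    · subst hi
      rw [h1, hskew j (fun h => hij h.symm)]
      simp
    · by_cases hj : j = ⟨0, hK⟩
      · subst hj
        rw [h1, hskew i hi]
        simp
      · rw [hskew i hi, hskew j hj]
        simp only [Matrix.neg_mul]
        rw [hanti i j hi hj hij]
        simp
  -- rewriting rules for Q interaction
  have hc1 : ∀ i j, (AI i)ᴴ * (Q * AI j) = ((AI i)ᴴ * AI j) * Q := by
    intro i j; rw [hcomm j, ← mul_assoc]
  have hc2 : ∀ i j, ((AI i)ᴴ * Q) * AI j = ((AI i)ᴴ * AI j) * Q := by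
    intro i j; rw [mul_assoc, hcomm j, ← mul_assoc]
  have hc3 : ∀ i j, ((AI i)ᴴ * Q) * (Q * AI j) = (AI i)ᴴ * AI j := by
    intro i j; rw [mul_assoc, ← mul_assoc Q, hQ2, one_mul]
  -- the summand
  set f : Fin K → Fin K → Matrix (Fin n) (Fin n) ℂ := fun i j =>
    ((u i * u j + v i * v j : ℝ) : ℂ) • ((AI i)ᴴ * AI j)
      + ((u i * v j + v i * u j : ℝ) : ℂ) • (((AI i)ᴴ * AI j) * Q) with hfdef
  have hf : ∀ i j, ((u i : ℂ) • (AI i)ᴴ + (v i : ℂ) • (AQ i)ᴴ)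
      * ((u j : ℂ) • AI j + (v j : ℂ) • AQ j) = f i j := by
    intro i j
    rw [hfdef]
    simp only [hAQ, Matrix.conjTranspose_mul, hQH, add_mul, mul_add, Matrix.smul_mul,
      Matrix.mul_smul, smul_smul, hc1, hc2, hc3]
    push_cast
    module
  have hDT : (∑ i : Fin K, ((u i : ℂ) • AI i + (v i : ℂ) • AQ i))ᴴ
      = ∑ i : Fin K, ((u i : ℂ) • (AI i)ᴴ + (v i : ℂ) • (AQ i)ᴴ) := by
    rw [Matrix.conjTranspose_sum]
    congr 1; funext i
    simp [Matrix.conjTranspose_add, Matrix.conjTranspose_smul, Complex.conj_ofReal]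
  show (∑ i : Fin K, ((u i : ℂ) • AI i + (v i : ℂ) • AQ i))ᴴ
      * (∑ i : Fin K, ((u i : ℂ) • AI i + (v i : ℂ) • AQ i))
    = ((∑ i : Fin K, (u i ^ 2 + v i ^ 2) : ℝ) : ℂ) • (1 : Matrix (Fin n) (Fin n) ℂ)
      + ((2 * ∑ i : Fin K, u i * v i : ℝ) : ℂ) • Q
  rw [hDT, Finset.sum_mul_sum]
  calc
    ∑ i : Fin K, ∑ j : Fin K, ((u i : ℂ) • (AI i)ᴴ + (v i : ℂ) • (AQ i)ᴴ)
        * ((u j : ℂ) • AI j + (v j : ℂ) • AQ j)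
        = ∑ i : Fin K, ∑ j : Fin K, f i j := by
          congr 1; funext i; congr 1; funext j; exact hf i j
    _ = ∑ i : Fin K, f i i := by
          apply cuw_sum_sum_eq_diag
          intro i j hij
          have hji : (AI j)ᴴ * AI i = -((AI i)ᴴ * AI j) :=
            eq_neg_of_add_eq_zero_left (by rw [add_comm]; exact hM i j hij)
          rw [hfdef]
          simp only [hji, Matrix.neg_mul]
          push_cast
          module
    _ = _ := by
          rw [hfdef]
          simp only [hUI, one_mul]
          rw [Finset.sum_add_distrib, ← Finset.sum_smul, ← Finset.sum_smul]
          congr 2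
          · push_cast; ring_nf
          · push_cast [Finset.mul_sum]
            exact Finset.sum_congr rfl fun x _ => by ring
end

section
/- Let (A_{iI}, A_{iQ})_{i=1}^K be n×n complex matrices with A_{1I} = I_n satisfying the CUW conditions, with every A_{iI} unitary and A_{1Q} unitary, and let m ≤ n be a natural number such that trace(A_{1Q}) = 2m − n (so the Hermitian unitary matrix A_{1Q}, whose eigenvalues are ±1, has +1 with multiplicity m). Then for all real numbers u_1,…,u_K, v_1,…,v_K, the matrix D = Σ_{i=1}^K (u_i A_{iI} + v_i A_{iQ}) satisfies det(DᴴD) = (Σ_{i=1}^K (u_i + v_i)²)^m · (Σ_{i=1}^K (u_i − v_i)²)^{n−m}. -/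
open Matrix Finset

theorem Finset.sum_sum_eq_sum_self_of_antisymm {ι M : Type*} [Fintype ι] [AddCommGroup M]
    (f : ι → ι → M) (hf : ∀ i j, i ≠ j → f j i = -f i j) :
    ∑ i, ∑ j, f i j = ∑ i, f i i := by
  classical
  have hoff : ∑ p ∈ univ.offDiag, f p.1 p.2 = 0 := by
    refine sum_involution (fun p _ => p.swap) (fun p hp => ?_) (fun p hp _ => ?_)
      (fun p hp => ?_) (fun p _ => rfl)
    · rw [Prod.fst_swap, Prod.snd_swap, hf _ _ (mem_offDiag.mp hp).2.2, add_neg_cancel]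
    · exact fun h => (mem_offDiag.mp hp).2.2 (congrArg Prod.snd h)
    · simpa [eq_comm] using hp
  rw [← sum_product', ← diag_union_offDiag, sum_union (disjoint_diag_offDiag _), hoff, add_zero,
    sum_diag]

theorem star_sum_mul_sum_eq_sum_mul_self {R ι : Type*} [Ring R] [StarRing R] [Fintype ι]
    (P A : ι → R) (hP : ∀ i, IsSelfAdjoint (P i)) (hPP : ∀ i j, Commute (P i) (P j))
    (hPA : ∀ i j, Commute (P i) (A j)) (hA : ∀ i, star (A i) * A i = 1)
    (hAA : ∀ i j, i ≠ j → star (A j) * A i = -(star (A i) * A j)) :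
    star (∑ i, P i * A i) * ∑ i, P i * A i = ∑ i, P i * P i := by
  have hPA' : ∀ i j, Commute (star (A j)) (P i) := fun i j => by
    simpa only [(hP i).star_eq] using (hPA i j).symm.star_star
  have hterm : ∀ i j, star (P i * A i) * (P j * A j) = P i * (P j * (star (A i) * A j)) :=
    fun i j => by
      rw [star_mul, (hP i).star_eq, mul_assoc, (hPA' i i).left_comm, (hPA' j i).left_comm]
  rw [star_sum, sum_mul_sum]
  simp_rw [hterm]
  rw [sum_sum_eq_sum_self_of_antisymm _ fun i j hij => by
    rw [hAA i j hij, (hPP j i).left_comm, mul_neg, mul_neg]]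
  simp_rw [hA, mul_one]

theorem Finset.prod_add_mul_of_eq_one_or_eq_neg_one {K ι : Type*} [Field K] [CharZero K]
    [Fintype ι] (d : ι → K) (hd : ∀ i, d i = 1 ∨ d i = -1) (m : ℕ)
    (hsum : ∑ i, d i = 2 * m - Fintype.card ι) (a b : K) :
    ∏ i, (a + b * d i) = (a + b) ^ m * (a - b) ^ (Fintype.card ι - m) := by
  classical
  set S := univ.filter (fun i => d i = 1)
  have hpos : ∀ i ∈ S, d i = 1 := fun i hi => (mem_filter.mp hi).2
  have hneg : ∀ i ∈ Sᶜ, d i = -1 := fun i hi => (hd i).resolve_left (by simpa [S] using hi)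
  have hS : #S = m := by
    have hsplit : ∑ i, d i = #S - #Sᶜ := by
      rw [← sum_add_sum_compl S, sum_congr rfl hpos, sum_congr rfl hneg, sum_const, sum_const,
        nsmul_eq_mul, nsmul_eq_mul, mul_one, mul_neg_one, sub_eq_add_neg]
    have hcard : (#S : K) + #Sᶜ = Fintype.card ι := by exact_mod_cast card_add_card_compl S
    have : (#S : K) = m := by linear_combination (hsplit.symm.trans hsum + hcard) / 2
    exact_mod_cast this
  have hplus : ∀ i ∈ S, a + b * d i = a + b := fun i hi => by rw [hpos i hi, mul_one]
  have hminus : ∀ i ∈ Sᶜ, a + b * d i = a - b := fun i hi => by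
    rw [hneg i hi, mul_neg_one, sub_eq_add_neg]
  rw [← prod_mul_prod_compl S, prod_congr rfl hplus, prod_congr rfl hminus, prod_const,
    prod_const, card_compl, hS]

namespace Matrix.IsHermitian

open Unitary

variable {𝕜 ι : Type*} [RCLike 𝕜] [Fintype ι] [DecidableEq ι] {Q : Matrix ι ι 𝕜}

theorem eigenvalues_mul_self_eq_one (hQ : Q.IsHermitian) (hQQ : Q * Q = 1) (i : ι) :
    hQ.eigenvalues i * hQ.eigenvalues i = 1 := by
  have h := congrArg (conjStarAlgAut 𝕜 _ (star hQ.eigenvectorUnitary)) hQQ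
  rw [map_mul, map_one, hQ.conjStarAlgAut_star_eigenvectorUnitary, diagonal_mul_diagonal,
    ← diagonal_one] at h
  have := congrFun (diagonal_injective h) i
  simp only [Function.comp_apply] at this
  exact_mod_cast this

theorem det_smul_one_add_smul (hQ : Q.IsHermitian) (a b : 𝕜) :
    (a • 1 + b • Q).det = ∏ i, (a + b * hQ.eigenvalues i) := by
  have hconj : a • 1 + b • Q = conjStarAlgAut 𝕜 _ hQ.eigenvectorUnitary
      (a • 1 + b • diagonal (RCLike.ofReal ∘ hQ.eigenvalues)) := by
    rw [map_add, map_smul, map_smul, map_one, ← hQ.spectral_theorem]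
  rw [hconj, conjStarAlgAut_apply, det_mul_right_comm,
    mul_star_self_of_mem hQ.eigenvectorUnitary.prop, one_mul, ← diagonal_one, ← diagonal_smul,
    ← diagonal_smul, diagonal_add, det_diagonal]
  simp

-- A Hermitian involution has eigenvalues `±1`, and its trace counts them.
theorem det_smul_one_add_smul_of_mul_self_eq_one (hQ : Q.IsHermitian) (hQQ : Q * Q = 1) {m : ℕ}
    (htr : Q.trace = 2 * m - Fintype.card ι) (a b : 𝕜) :
    (a • 1 + b • Q).det = (a + b) ^ m * (a - b) ^ (Fintype.card ι - m) := by
  have hd : ∀ i, (hQ.eigenvalues i : 𝕜) = 1 ∨ (hQ.eigenvalues i : 𝕜) = -1 := fun i => by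
    exact_mod_cast mul_self_eq_one_iff.mp (hQ.eigenvalues_mul_self_eq_one hQQ i)
  rw [hQ.det_smul_one_add_smul,
    prod_add_mul_of_eq_one_or_eq_neg_one _ hd m (hQ.trace_eq_sum_eigenvalues ▸ htr)]

end Matrix.IsHermitian

theorem Commute.smul_one_add_smul_left {R A : Type*} [CommSemiring R] [Semiring A] [Algebra R A]
    {x y : A} (h : Commute x y) (a b : R) : Commute (a • 1 + b • x) y :=
  ((Commute.one_left y).smul_left a).add_left (h.smul_left b)

theorem smul_one_add_smul_mul_self {R A : Type*} [CommSemiring R] [Semiring A] [Algebra R A]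
    {x : A} (hx : x * x = 1) (a b : R) :
    (a • 1 + b • x) * (a • 1 + b • x) = (a * a + b * b) • 1 + (2 * a * b) • x := by
  simp only [add_mul, mul_add, smul_mul_smul, one_mul, mul_one, hx]
  module

namespace CUWConds

variable {n K : ℕ} {hK : 0 < K} {AI AQ : Fin K → Matrix (Fin n) (Fin n) ℂ}

theorem AQ_eq_mul (h : CUWConds hK AI AQ) (i : Fin K) : AQ i = AQ ⟨0, hK⟩ * AI i := by
  by_cases hi : i = ⟨0, hK⟩
  · rw [hi, h.1, mul_one]
  · exact h.2.2.2.2.1 i hi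

theorem conjTranspose_mul_antisymm (h : CUWConds hK AI AQ) {i j : Fin K} (hij : i ≠ j) :
    (AI j)ᴴ * AI i = -((AI i)ᴴ * AI j) := by
  obtain ⟨h1, hskew, hanti, -⟩ := h
  by_cases hi : i = ⟨0, hK⟩
  · subst hi
    rw [h1, hskew j (Ne.symm hij), conjTranspose_one, mul_one, one_mul]
  by_cases hj : j = ⟨0, hK⟩
  · subst hj
    rw [h1, hskew i hij, conjTranspose_one, mul_one, one_mul, neg_neg]
  rw [hskew i hi, hskew j hj, neg_mul, neg_mul, hanti j i hj hi (Ne.symm hij), neg_neg]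

end CUWConds

theorem cuw_codeword_difference_det_general {n K : ℕ} (hK : 0 < K)
    (AI AQ : Fin K → Matrix (Fin n) (Fin n) ℂ)
    (hUI : ∀ i, (AI i)ᴴ * AI i = 1)
    (hUQ1 : (AQ ⟨0, hK⟩)ᴴ * AQ ⟨0, hK⟩ = 1)
    (hCUW : CUWConds hK AI AQ)
    (m : ℕ)
    (htr : (AQ ⟨0, hK⟩).trace = 2 * (m : ℂ) - (n : ℂ))
    (u v : Fin K → ℝ) :
    letI D : Matrix (Fin n) (Fin n) ℂ :=
      ∑ i : Fin K, ((u i : ℂ) • AI i + (v i : ℂ) • AQ i)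
    (Dᴴ * D).det =
      ((∑ i : Fin K, (u i + v i) ^ 2 : ℝ) : ℂ) ^ m *
        ((∑ i : Fin K, (u i - v i) ^ 2 : ℝ) : ℂ) ^ (n - m) := by
  set Q := AQ ⟨0, hK⟩
  have hQ : Q.IsHermitian := hCUW.2.2.2.1
  have hQA : ∀ j, Commute Q (AI j) := hCUW.2.2.2.2.2
  have hQQ : Q * Q = 1 := by rwa [hQ.eq] at hUQ1
  set P : Fin K → Matrix (Fin n) (Fin n) ℂ := fun i => (u i : ℂ) • 1 + (v i : ℂ) • Q
  have hD : ∑ i, ((u i : ℂ) • AI i + (v i : ℂ) • AQ i) = ∑ i, P i * AI i :=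
    sum_congr rfl fun i _ => by rw [hCUW.AQ_eq_mul i, add_mul, smul_one_mul, smul_mul_assoc]
  have hPQ : ∀ i, Commute (P i) Q := fun i => (Commute.refl Q).smul_one_add_smul_left _ _
  have hreal : ∀ r : ℝ, IsSelfAdjoint (r : ℂ) := fun r => Complex.conj_ofReal r
  have hgram : (∑ i, P i * AI i)ᴴ * ∑ i, P i * AI i = ∑ i, P i * P i :=
    star_sum_mul_sum_eq_sum_mul_self P AI
      (fun i => ((hreal _).smul (.one _)).add ((hreal _).smul hQ))
      (fun i j => (hPQ j).symm.smul_one_add_smul_left _ _)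
      (fun i j => (hQA j).smul_one_add_smul_left _ _) hUI
      (fun _ _ => hCUW.conjTranspose_mul_antisymm)
  simp only [hD, hgram, P, smul_one_add_smul_mul_self hQQ]
  rw [sum_add_distrib, ← sum_smul, ← sum_smul,
    hQ.det_smul_one_add_smul_of_mul_self_eq_one hQQ (by rwa [Fintype.card_fin]), Fintype.card_fin]
  push_cast
  simp only [← sum_add_distrib, ← sum_sub_distrib]
  congr 2 <;> exact sum_congr rfl fun i _ => by ring

/-- Determinant of the Gram matrix of a codeword difference of a CUW-SSD code
whose discriminant `A_{1Q}` (Hermitian unitary, eigenvalues `±1`) has trace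
`2m - n`: it equals `(Σ (uᵢ+vᵢ)²)^m (Σ (uᵢ-vᵢ)²)^(n-m)`. -/
theorem cuw_codeword_difference_det {n K : ℕ} (hK : 0 < K)
    (AI AQ : Fin K → Matrix (Fin n) (Fin n) ℂ)
    (hUI : ∀ i, (AI i)ᴴ * AI i = 1)
    (hUQ1 : (AQ ⟨0, hK⟩)ᴴ * AQ ⟨0, hK⟩ = 1)
    (hCUW : CUWConds hK AI AQ)
    (m : ℕ) (hm : m ≤ n)
    (htr : (AQ ⟨0, hK⟩).trace = 2 * (m : ℂ) - (n : ℂ))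
    (u v : Fin K → ℝ) :
    letI D : Matrix (Fin n) (Fin n) ℂ :=
      ∑ i : Fin K, ((u i : ℂ) • AI i + (v i : ℂ) • AQ i)
    (Dᴴ * D).det =
      ((∑ i : Fin K, (u i + v i) ^ 2 : ℝ) : ℂ) ^ m *
        ((∑ i : Fin K, (u i - v i) ^ 2 : ℝ) : ℂ) ^ (n - m) :=
  cuw_codeword_difference_det_general hK AI AQ hUI hUQ1 hCUW m htr u v
end

section
/- Let (A_{iI}, A_{iQ})_{i=1}^K (K ≥ 1) be n×n complex matrices with A_{1I} = I_n satisfying the CUW conditions, with every A_{iI} unitary and A_{1Q} unitary, and suppose A_{1Q} is not a scalar multiple of I_n. Let 𝕊 ⊆ ℂ be a signal set, and for x = (x_1,…,x_K) ∈ 𝕊^K define S(x) = Σ_{i=1}^K (Re(x_i)·A_{iI} + Im(x_i)·A_{iQ}). Then S(x) − S(y) is invertible for all distinct x, y ∈ 𝕊^K (full diversity) if and only if every nonzero element δ of the difference set Δ𝕊 = {s − t : s, t ∈ 𝕊} satisfies Re(δ) ≠ Im(δ) and Re(δ) ≠ −Im(δ), i.e., Δ𝕊 meets the lines at ±45 degrees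 in the complex plane only at the origin. -/
open Matrix

private lemma sum_sum_eq_diag {K : ℕ} {M : Type*} [AddCommGroup M] [Module ℂ M]
    [NoZeroSMulDivisors ℂ M]
    (f : Fin K → Fin K → M) (h : ∀ i j, i ≠ j → f i j + f j i = 0) :
    ∑ i, ∑ j, f i j = ∑ i, f i i := by
  have h3 : ∀ i : Fin K, (∑ j, (f i j + f j i)) = (2:ℂ) • f i i := by
    intro i
    rw [Finset.sum_eq_single i]
    · rw [two_smul]
    · intro j _ hj; exact h i j (Ne.symm hj)
    · intro hi; exact absurd (Finset.mem_univ i) hi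
  have key : (2:ℂ) • (∑ i, ∑ j, f i j) = (2:ℂ) • ∑ i, f i i := by
    calc (2:ℂ) • (∑ i, ∑ j, f i j)
        = (∑ i, ∑ j, f i j) + (∑ i, ∑ j, f i j) := two_smul ℂ _
      _ = (∑ i, ∑ j, f i j) + (∑ i, ∑ j, f j i) := by
          rw [Finset.sum_comm (f := fun j i => f j i)]
      _ = ∑ i, ∑ j, (f i j + f j i) := by
          rw [← Finset.sum_add_distrib]
          exact Finset.sum_congr rfl fun i _ => (Finset.sum_add_distrib).symm
      _ = ∑ i, (2:ℂ) • f i i := Finset.sum_congr rfl fun i _ => h3 i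
      _ = (2:ℂ) • ∑ i, f i i := (Finset.smul_sum).symm
  exact smul_right_injective M two_ne_zero key

/-- Full-diversity criterion for a CUW-SSD code with non-scalar discriminant:
all codeword differences are invertible iff the nonzero points of the
difference signal set avoid the lines at `±45°` in the complex plane. -/
theorem cuw_full_diversity_iff {n K : ℕ} (hK : 0 < K)
    (AI AQ : Fin K → Matrix (Fin n) (Fin n) ℂ)
    (hUI : ∀ i, (AI i)ᴴ * AI i = 1)
    (hUQ : ∀ i, (AQ i)ᴴ * AQ i = 1)
    (hCUW : CUWConds hK AI AQ)
    (hNS : ¬ ∃ c : ℂ, AQ ⟨0, hK⟩ = c • (1 : Matrix (Fin n) (Fin n) ℂ))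
    (𝕊 : Set ℂ) :
    (∀ x y : Fin K → ℂ, (∀ i, x i ∈ 𝕊) → (∀ i, y i ∈ 𝕊) → x ≠ y →
        IsUnit (∑ i : Fin K, (((x i).re : ℂ) • AI i + ((x i).im : ℂ) • AQ i)
          - ∑ i : Fin K, (((y i).re : ℂ) • AI i + ((y i).im : ℂ) • AQ i))) ↔
      (∀ s t : ℂ, s ∈ 𝕊 → t ∈ 𝕊 → s - t ≠ 0 →
        (s - t).re ≠ (s - t).im ∧ (s - t).re ≠ -(s - t).im) := by
  obtain ⟨h1, hskew, hanti, hQH, hAQdef, hQcomm⟩ := hCUW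
  set e : Fin K := ⟨0, hK⟩ with he
  set Q : Matrix (Fin n) (Fin n) ℂ := AQ e with hQdef
  -- basic consequences
  have hQ2 : Q * Q = 1 := by rw [← hUQ e, hQH]
  have hAQall : ∀ i, AQ i = Q * AI i := by
    intro i
    by_cases h : i = e
    · rw [h, h1, mul_one]
    · exact hAQdef i h
  -- anticommutation in Hermitian form
  have hpair : ∀ i j : Fin K, i ≠ j → (AI i)ᴴ * AI j + (AI j)ᴴ * AI i = 0 := by
    intro i j hij
    by_cases hi : i = e
    · have hj : j ≠ e := fun h => hij (hi.trans h.symm)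
      rw [hi, h1, hskew j hj]
      simp
    · by_cases hj : j = e
      · rw [hj, h1, hskew i hi]
        simp
      · rw [hskew i hi, hskew j hj, neg_mul, neg_mul, hanti i j hi hj hij]
        simp
  -- the key product expansion for a single pair
  have hTT : ∀ (a b : Fin K → ℝ) (i j : Fin K),
      (((a i : ℂ)) • AI i + ((b i : ℂ)) • AQ i)ᴴ * (((a j : ℂ)) • AI j + ((b j : ℂ)) • AQ j)
      = (((a i : ℂ)) * (a j) + ((b i : ℂ)) * (b j)) • ((AI i)ᴴ * AI j)
        + (((a i : ℂ)) * (b j) + ((b i : ℂ)) * (a j)) • ((AI i)ᴴ * (AI j * Q)) := by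
    intro a b i j
    rw [hAQall i, hAQall j]
    simp only [conjTranspose_add, conjTranspose_smul, conjTranspose_mul, hQH,
      Complex.star_def, Complex.conj_ofReal, add_mul, mul_add,
      smul_mul_assoc, mul_smul_comm, smul_smul, mul_assoc]
    rw [show Q * (Q * AI j) = AI j from by rw [← mul_assoc, hQ2, one_mul]]
    rw [hQcomm j]
    match_scalars <;> ring
  have h_off : ∀ (a b : Fin K → ℝ) (i j : Fin K), i ≠ j →
      (((a i : ℂ)) • AI i + ((b i : ℂ)) • AQ i)ᴴ * (((a j : ℂ)) • AI j + ((b j : ℂ)) • AQ j)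
      + (((a j : ℂ)) • AI j + ((b j : ℂ)) • AQ j)ᴴ * (((a i : ℂ)) • AI i + ((b i : ℂ)) • AQ i)
      = 0 := by
    intro a b i j hij
    have hswap : (AI j)ᴴ * AI i = -((AI i)ᴴ * AI j) :=
      eq_neg_of_add_eq_zero_left (by rw [add_comm]; exact hpair i j hij)
    have hswap2 : (AI j)ᴴ * (AI i * Q) = -((AI i)ᴴ * (AI j * Q)) := by
      rw [← mul_assoc, ← mul_assoc, hswap, neg_mul]
    rw [hTT a b i j, hTT a b j i, hswap, hswap2]
    match_scalars <;> ring
  have h_diag : ∀ (a b : Fin K → ℝ) (i : Fin K),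
      (((a i : ℂ)) • AI i + ((b i : ℂ)) • AQ i)ᴴ * (((a i : ℂ)) • AI i + ((b i : ℂ)) • AQ i)
      = ((((a i)^2 + (b i)^2 : ℝ)) : ℂ) • (1 : Matrix (Fin n) (Fin n) ℂ)
        + (((2 * (a i * b i) : ℝ)) : ℂ) • Q := by
    intro a b i
    rw [hTT a b i i, ← mul_assoc, hUI i, one_mul]
    push_cast
    match_scalars <;> ring
  -- the master formula
  have hkey : ∀ a b : Fin K → ℝ,
      (∑ i, (((a i : ℂ)) • AI i + ((b i : ℂ)) • AQ i))ᴴ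
        * (∑ i, (((a i : ℂ)) • AI i + ((b i : ℂ)) • AQ i))
      = (((∑ i, ((a i)^2 + (b i)^2) : ℝ)) : ℂ) • (1 : Matrix (Fin n) (Fin n) ℂ)
        + (((∑ i, 2 * (a i * b i) : ℝ)) : ℂ) • Q := by
    intro a b
    rw [conjTranspose_sum, Finset.sum_mul_sum]
    rw [sum_sum_eq_diag _ (h_off a b)]
    rw [Finset.sum_congr rfl fun i _ => h_diag a b i]
    rw [Finset.sum_add_distrib, ← Finset.sum_smul, ← Finset.sum_smul]
    push_cast
    rfl
  -- rewriting the codeword difference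
  have hDdiff : ∀ x y : Fin K → ℂ,
      (∑ i : Fin K, (((x i).re : ℂ) • AI i + ((x i).im : ℂ) • AQ i)
        - ∑ i : Fin K, (((y i).re : ℂ) • AI i + ((y i).im : ℂ) • AQ i))
      = ∑ i, ((((x i - y i).re : ℝ) : ℂ) • AI i + (((x i - y i).im : ℝ) : ℂ) • AQ i) := by
    intro x y
    rw [← Finset.sum_sub_distrib]
    refine Finset.sum_congr rfl fun i _ => ?_
    simp only [Complex.sub_re, Complex.sub_im]
    push_cast
    rw [sub_smul, sub_smul]
    abel
  -- unit transfer between D and DᴴD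
  have hDtoDD : ∀ D : Matrix (Fin n) (Fin n) ℂ, IsUnit D → IsUnit (Dᴴ * D) := by
    intro D hD
    refine (isUnit_iff_isUnit_det _).mpr ?_
    rw [det_mul, det_conjTranspose]
    exact (((isUnit_iff_isUnit_det _).mp hD).star.mul ((isUnit_iff_isUnit_det _).mp hD))
  have hDDtoD : ∀ D : Matrix (Fin n) (Fin n) ℂ, IsUnit (Dᴴ * D) → IsUnit D := by
    intro D hDD
    rw [isUnit_iff_isUnit_det] at hDD ⊢
    rw [det_mul] at hDD
    exact isUnit_of_mul_isUnit_right hDD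
  -- invertibility from nonvanishing eigenvalues
  have hInv : ∀ α β : ℝ, α + β ≠ 0 → α - β ≠ 0 →
      IsUnit (((α : ℂ)) • (1 : Matrix (Fin n) (Fin n) ℂ) + ((β : ℂ)) • Q) := by
    intro α β hp hm
    have hc : (α^2 - β^2 : ℝ) ≠ 0 := by
      intro h
      rcases mul_eq_zero.mp (by nlinarith : (α + β) * (α - β) = 0) with h' | h'
      exacts [hp h', hm h']
    have hMN0 : (((α : ℂ)) • (1 : Matrix (Fin n) (Fin n) ℂ) + ((β : ℂ)) • Q)
        * (((α : ℂ)) • (1 : Matrix (Fin n) (Fin n) ℂ) - ((β : ℂ)) • Q)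
        = (((α^2 - β^2 : ℝ)) : ℂ) • (1 : Matrix (Fin n) (Fin n) ℂ) := by
      simp only [mul_sub, add_mul, smul_mul_assoc, mul_smul_comm, smul_smul,
        one_mul, mul_one, hQ2]
      push_cast
      match_scalars <;> ring
    have hMN : (((α : ℂ)) • (1 : Matrix (Fin n) (Fin n) ℂ) + ((β : ℂ)) • Q)
        * ((((α^2 - β^2 : ℝ)⁻¹ : ℝ) : ℂ) •
            (((α : ℂ)) • (1 : Matrix (Fin n) (Fin n) ℂ) - ((β : ℂ)) • Q)) = 1 := by
      rw [mul_smul_comm, hMN0, smul_smul]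
      rw [show ((((α^2 - β^2 : ℝ)⁻¹ : ℝ)) : ℂ) * (((α^2 - β^2 : ℝ)) : ℂ) = 1 by
        rw [← Complex.ofReal_mul, inv_mul_cancel₀ hc, Complex.ofReal_one]]
      rw [one_smul]
    have := invertibleOfRightInverse _ _ hMN
    exact isUnit_of_invertible _
  -- Q is not ±1
  have hQne1 : Q ≠ 1 := fun h => hNS ⟨1, by rw [h, one_smul]⟩
  have hQneneg1 : Q ≠ -1 := fun h => hNS ⟨-1, by rw [h]; simp⟩
  constructor
  · -- full diversity → 45° condition
    intro H s t hs ht hst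
    set x : Fin K → ℂ := fun i => if i = e then s else t with hx
    set y : Fin K → ℂ := fun _ => t with hy
    have hxmem : ∀ i, x i ∈ 𝕊 := by
      intro i
      by_cases h : i = e <;> simp [hx, h, hs, ht]
    have hymem : ∀ i, y i ∈ 𝕊 := fun i => ht
    have hxy : x ≠ y := by
      intro h
      have h2 := congrFun h e
      simp [hx, hy] at h2
      exact hst (by rw [h2, sub_self])
    have hU := hDtoDD _ (H x y hxmem hymem hxy)
    rw [hDdiff x y,
      hkey (fun k => (x k - y k).re) (fun k => (x k - y k).im)] at hU
    have hsub : ∀ i, x i - y i = if i = e then s - t else 0 := by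
      intro i
      by_cases h : i = e <;> simp [hx, hy, h]
    have hα : (∑ i, (((x i - y i).re)^2 + ((x i - y i).im)^2))
        = ((s-t).re)^2 + ((s-t).im)^2 := by
      rw [Finset.sum_eq_single e]
      · rw [hsub e]; simp
      · intro j _ hj; rw [hsub j]; simp [hj]
      · intro h; exact absurd (Finset.mem_univ e) h
    have hβ : (∑ i, 2 * ((x i - y i).re * (x i - y i).im))
        = 2 * ((s-t).re * (s-t).im) := by
      rw [Finset.sum_eq_single e]
      · rw [hsub e]; simp
      · intro j _ hj; rw [hsub j]; simp [hj]
      · intro h; exact absurd (Finset.mem_univ e) h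
    rw [hα, hβ] at hU
    constructor
    · -- re ≠ im
      intro hrm
      have hr0 : (s-t).re ≠ 0 := by
        intro h0
        exact hst (Complex.ext_iff.mpr ⟨by simp [h0], by simp [← hrm, h0]⟩)
      have hform : ((((s-t).re^2 + (s-t).im^2 : ℝ)) : ℂ) • (1 : Matrix (Fin n) (Fin n) ℂ)
          + (((2 * ((s-t).re * (s-t).im) : ℝ)) : ℂ) • Q
          = (((2 * (s-t).re^2 : ℝ)) : ℂ) • ((1 : Matrix (Fin n) (Fin n) ℂ) + Q) := by
        rw [smul_add, ← hrm]
        push_cast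
        match_scalars <;> ring
      rw [hform] at hU
      have hUc : IsUnit ((1 : Matrix (Fin n) (Fin n) ℂ) + Q) := by
        rw [isUnit_iff_isUnit_det] at hU ⊢
        rw [det_smul] at hU
        exact isUnit_of_mul_isUnit_right hU
      have hzero : (Q - 1) * ((1 : Matrix (Fin n) (Fin n) ℂ) + Q) = 0 := by
        have h' : (Q - 1) * ((1 : Matrix (Fin n) (Fin n) ℂ) + Q) = Q * Q - 1 := by
          noncomm_ring
        rw [h', hQ2, sub_self]
      have hfin : Q - 1 = 0 := hUc.mul_right_cancel (by rw [hzero, zero_mul])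
      exact hQne1 (by rwa [sub_eq_zero] at hfin)
    · -- re ≠ -im
      intro hrm
      have him : (s-t).im = -(s-t).re := by rw [hrm, neg_neg]
      have hr0 : (s-t).re ≠ 0 := by
        intro h0
        exact hst (Complex.ext_iff.mpr ⟨by simp [h0], by simp [him, h0]⟩)
      have hform : ((((s-t).re^2 + (s-t).im^2 : ℝ)) : ℂ) • (1 : Matrix (Fin n) (Fin n) ℂ)
          + (((2 * ((s-t).re * (s-t).im) : ℝ)) : ℂ) • Q
          = (((2 * (s-t).re^2 : ℝ)) : ℂ) • ((1 : Matrix (Fin n) (Fin n) ℂ) - Q) := by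
        rw [smul_sub, him]
        push_cast
        match_scalars <;> ring
      rw [hform] at hU
      have hUc : IsUnit ((1 : Matrix (Fin n) (Fin n) ℂ) - Q) := by
        rw [isUnit_iff_isUnit_det] at hU ⊢
        rw [det_smul] at hU
        exact isUnit_of_mul_isUnit_right hU
      have hzero : (Q + 1) * ((1 : Matrix (Fin n) (Fin n) ℂ) - Q) = 0 := by
        have h' : (Q + 1) * ((1 : Matrix (Fin n) (Fin n) ℂ) - Q) = 1 - Q * Q := by
          noncomm_ring
        rw [h', hQ2, sub_self]
      have hfin : Q + 1 = 0 := hUc.mul_right_cancel (by rw [hzero, zero_mul])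
      exact hQneneg1 (by rwa [add_eq_zero_iff_eq_neg] at hfin)
  · -- 45° condition → full diversity
    intro H x y hx hy hxy
    obtain ⟨i0, hi0⟩ := Function.ne_iff.mp hxy
    have hδ : x i0 - y i0 ≠ 0 := sub_ne_zero.mpr hi0
    obtain ⟨hne1, hne2⟩ := H (x i0) (y i0) (hx i0) (hy i0) hδ
    apply hDDtoD
    rw [hDdiff x y,
      hkey (fun k => (x k - y k).re) (fun k => (x k - y k).im)]
    apply hInv
    · -- sum + sum ≠ 0
      have hsum : (∑ i, (((x i - y i).re)^2 + ((x i - y i).im)^2))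
          + (∑ i, 2 * ((x i - y i).re * (x i - y i).im))
          = ∑ i, ((x i - y i).re + (x i - y i).im)^2 := by
        rw [← Finset.sum_add_distrib]
        exact Finset.sum_congr rfl fun i _ => by ring
      rw [hsum]
      have hpos : 0 < ∑ i, ((x i - y i).re + (x i - y i).im)^2 := by
        refine Finset.sum_pos' (fun i _ => sq_nonneg _) ⟨i0, Finset.mem_univ i0, ?_⟩
        have hne : (x i0 - y i0).re + (x i0 - y i0).im ≠ 0 := by
          intro h; exact hne2 (by linarith)
        exact lt_of_le_of_ne (sq_nonneg _) (Ne.symm (pow_ne_zero 2 hne))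
      exact ne_of_gt hpos
    · -- sum - sum ≠ 0
      have hsum : (∑ i, (((x i - y i).re)^2 + ((x i - y i).im)^2))
          - (∑ i, 2 * ((x i - y i).re * (x i - y i).im))
          = ∑ i, ((x i - y i).re - (x i - y i).im)^2 := by
        rw [← Finset.sum_sub_distrib]
        exact Finset.sum_congr rfl fun i _ => by ring
      rw [hsum]
      have hpos : 0 < ∑ i, ((x i - y i).re - (x i - y i).im)^2 := by
        refine Finset.sum_pos' (fun i _ => sq_nonneg _) ⟨i0, Finset.mem_univ i0, ?_⟩
        have hne : (x i0 - y i0).re - (x i0 - y i0).im ≠ 0 := by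
          intro h; exact hne1 (by linarith)
        exact lt_of_le_of_ne (sq_nonneg _) (Ne.symm (pow_ne_zero 2 hne))
      exact ne_of_gt hpos
end

section
/- Let (A_{iI}, A_{iQ})_{i=1}^K be n×n complex matrices, all unitary, with A_{1I} = I_n, satisfying the CUW conditions, and let α, β be nonzero real numbers. Define the transformed weight matrices T_{iI} = α·A_{iI} + β·A_{iQ} and T_{iQ} = α·A_{iI} − β·A_{iQ} for 1 ≤ i ≤ K. Then the family (T_{iI}, T_{iQ})_{i=1}^K satisfies the SSD conditions; i.e., the Transformed Non-Unitary code is single-symbol decodable. -/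
open Matrix

private lemma tnu_key {n : ℕ} (a b c d : Matrix (Fin n) (Fin n) ℂ) (α β : ℝ)
    (h3 : aᴴ * c + cᴴ * a = 0) (h4 : bᴴ * d + dᴴ * b = 0)
    (h1 : aᴴ * d + dᴴ * a = 0) (h2 : bᴴ * c + cᴴ * b = 0) :
    ((α : ℂ) • a + (β : ℂ) • b)ᴴ * ((α : ℂ) • c + (β : ℂ) • d) +
      ((α : ℂ) • c + (β : ℂ) • d)ᴴ * ((α : ℂ) • a + (β : ℂ) • b) = 0 := by
  have expand :
      ((α : ℂ) • a + (β : ℂ) • b)ᴴ * ((α : ℂ) • c + (β : ℂ) • d) +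
        ((α : ℂ) • c + (β : ℂ) • d)ᴴ * ((α : ℂ) • a + (β : ℂ) • b) =
      ((α : ℂ) * α) • (aᴴ * c + cᴴ * a) + ((β : ℂ) * β) • (bᴴ * d + dᴴ * b) +
        ((α : ℂ) * β) • (aᴴ * d + dᴴ * a) + ((α : ℂ) * β) • (bᴴ * c + cᴴ * b) := by
    simp only [conjTranspose_add, conjTranspose_smul, Complex.star_def, Complex.conj_ofReal,
      add_mul, mul_add, smul_mul_assoc, mul_smul_comm, smul_smul, smul_add]
    module
  rw [expand, h1, h2, h3, h4]
  simp

/-- The Transformed Non-Unitary code obtained from a CUW-SSD code via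
`T_{iI} = αA_{iI} + βA_{iQ}`, `T_{iQ} = αA_{iI} − βA_{iQ}` is single-symbol
decodable. -/
theorem tnu_code_is_ssd {n K : ℕ} (hK : 0 < K)
    (AI AQ : Fin K → Matrix (Fin n) (Fin n) ℂ)
    (hUI : ∀ i, (AI i)ᴴ * AI i = 1)
    (hUQ : ∀ i, (AQ i)ᴴ * AQ i = 1)
    (hCUW : CUWConds hK AI AQ)
    (α β : ℝ) (hα : α ≠ 0) (hβ : β ≠ 0) :
    SSDConds (fun i => (α : ℂ) • AI i + (β : ℂ) • AQ i)
      (fun i => (α : ℂ) • AI i - (β : ℂ) • AQ i) := by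
  obtain ⟨h1I, hskew, hanti, hQH, hAQ, hcommQ⟩ := hCUW
  set Q : Matrix (Fin n) (Fin n) ℂ := AQ ⟨0, hK⟩ with hQdef
  -- AQ i = Q * AI i for all i
  have hAQall : ∀ i, AQ i = Q * AI i := by
    intro i
    by_cases h : i = ⟨0, hK⟩
    · subst h; rw [h1I, mul_one]
    · exact hAQ i h
  -- Q commutes with conjTransposes of AI i
  have hcommH : ∀ i, (AI i)ᴴ * Q = Q * (AI i)ᴴ := by
    intro i
    calc (AI i)ᴴ * Q = (Qᴴ * AI i)ᴴ := by rw [conjTranspose_mul, conjTranspose_conjTranspose]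
    _ = (Q * AI i)ᴴ := by rw [hQH]
    _ = (AI i * Q)ᴴ := by rw [hcommQ i]
    _ = Qᴴ * (AI i)ᴴ := by rw [conjTranspose_mul]
    _ = Q * (AI i)ᴴ := by rw [hQH]
  -- original SSD condition on the I-matrices
  have hS2 : ∀ i j : Fin K, i ≠ j → (AI i)ᴴ * AI j + (AI j)ᴴ * AI i = 0 := by
    intro i j hij
    by_cases hi : i = ⟨0, hK⟩
    · subst hi
      have hj : j ≠ (⟨0, hK⟩ : Fin K) := fun h => hij h.symm
      rw [h1I, hskew j hj]
      simp
    · by_cases hj : j = ⟨0, hK⟩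
      · subst hj
        rw [h1I, hskew i hi]
        simp
      · rw [hskew i hi, hskew j hj, neg_mul, neg_mul, hanti i j hi hj hij]
        simp
  -- moving Q's around
  have hkey : ∀ a b : Fin K, (AI a)ᴴ * Q * (Q * AI b) = Q * ((AI a)ᴴ * AI b) * Q := by
    intro a b
    rw [hcommH a, mul_assoc Q ((AI a)ᴴ) (Q * AI b), hcommQ b,
      ← mul_assoc ((AI a)ᴴ) (AI b) Q, ← mul_assoc]
  -- the mixed SSD condition
  have hS1 : ∀ i j : Fin K, i ≠ j → (AI i)ᴴ * AQ j + (AQ j)ᴴ * AI i = 0 := by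
    intro i j hij
    rw [hAQall j, conjTranspose_mul, hQH, hcommQ j, ← mul_assoc,
      mul_assoc ((AI j)ᴴ) Q (AI i), hcommQ i, ← mul_assoc ((AI j)ᴴ) (AI i) Q,
      ← add_mul, hS2 i j hij, zero_mul]
  -- the Q-SSD condition
  have hS3 : ∀ i j : Fin K, i ≠ j → (AQ i)ᴴ * AQ j + (AQ j)ᴴ * AQ i = 0 := by
    intro i j hij
    rw [hAQall i, hAQall j, conjTranspose_mul, conjTranspose_mul, hQH,
      hkey i j, hkey j i, ← add_mul, ← mul_add, hS2 i j hij, mul_zero, zero_mul]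
  intro i j hij
  have h2' : (AQ i)ᴴ * AI j + (AI j)ᴴ * AQ i = 0 := by
    rw [add_comm]; exact hS1 j i (fun h => hij h.symm)
  refine ⟨?_, ?_, ?_⟩
  · -- TiI, TjQ
    have h4 : (AQ i)ᴴ * (-(AQ j)) + (-(AQ j))ᴴ * AQ i = 0 := by
      rw [conjTranspose_neg, mul_neg, neg_mul, ← neg_add, hS3 i j hij, neg_zero]
    have h1 : (AI i)ᴴ * (-(AQ j)) + (-(AQ j))ᴴ * AI i = 0 := by
      rw [conjTranspose_neg, mul_neg, neg_mul, ← neg_add, hS1 i j hij, neg_zero]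
    have := tnu_key (AI i) (AQ i) (AI j) (-(AQ j)) α β (hS2 i j hij) h4 h1 h2'
    simpa [sub_eq_add_neg, smul_neg] using this
  · -- TiI, TjI
    exact tnu_key (AI i) (AQ i) (AI j) (AQ j) α β (hS2 i j hij) (hS3 i j hij)
      (hS1 i j hij) h2'
  · -- TiQ, TjQ
    have h4 : (-(AQ i))ᴴ * (-(AQ j)) + (-(AQ j))ᴴ * (-(AQ i)) = 0 := by
      simpa using hS3 i j hij
    have h1 : (AI i)ᴴ * (-(AQ j)) + (-(AQ j))ᴴ * AI i = 0 := by
      rw [conjTranspose_neg, mul_neg, neg_mul, ← neg_add, hS1 i j hij, neg_zero]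
    have h2'' : (-(AQ i))ᴴ * AI j + (AI j)ᴴ * (-(AQ i)) = 0 := by
      rw [conjTranspose_neg, mul_neg, neg_mul, ← neg_add, h2', neg_zero]
    have := tnu_key (AI i) (-(AQ i)) (AI j) (-(AQ j)) α β (hS2 i j hij) h4 h1 h2''
    simpa [sub_eq_add_neg, smul_neg] using this
end

section
/- Let (A_{iI}, A_{iQ})_{i=1}^K be n×n complex matrices, all unitary, with A_{1I} = I_n, satisfying the CUW conditions, and let α, β be nonzero real numbers. Define T_{iI} = α·A_{iI} + β·A_{iQ} and T_{iQ} = α·A_{iI} − β·A_{iQ}. Then for every i ∈ {1,…,K}: T_{iI}ᴴ T_{iQ} + T_{iQ}ᴴ T_{iI} = 2(α² − β²)·I_n. Consequently, T_{iI}ᴴ T_{iQ} + T_{iQ}ᴴ T_{iI} = 0 for all i if and only if α = β or α = −β; i.e., the Transformed Non-Unitary code is a proper SSD (PSSD) code if and only if α ≠ ±β. -/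
open Matrix

/-- For the Transformed Non-Unitary code, `T_{iI}ᴴT_{iQ} + T_{iQ}ᴴT_{iI} =
2(α² − β²) I` for every `i`; consequently this vanishes for all `i` iff
`α = ±β`, i.e. the TNU code is a PSSD code iff `α ≠ ±β`. -/
theorem tnu_pssd_iff {n K : ℕ} (hn : 0 < n) (hK : 0 < K)
    (AI AQ : Fin K → Matrix (Fin n) (Fin n) ℂ)
    (hUI : ∀ i, (AI i)ᴴ * AI i = 1)
    (hUQ : ∀ i, (AQ i)ᴴ * AQ i = 1)
    (hCUW : CUWConds hK AI AQ)
    (α β : ℝ) (hα : α ≠ 0) (hβ : β ≠ 0) :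
    letI TI : Fin K → Matrix (Fin n) (Fin n) ℂ := fun i => (α : ℂ) • AI i + (β : ℂ) • AQ i
    letI TQ : Fin K → Matrix (Fin n) (Fin n) ℂ := fun i => (α : ℂ) • AI i - (β : ℂ) • AQ i
    (∀ i : Fin K, (TI i)ᴴ * TQ i + (TQ i)ᴴ * TI i =
        ((2 * (α ^ 2 - β ^ 2) : ℝ) : ℂ) • (1 : Matrix (Fin n) (Fin n) ℂ)) ∧
    ((∀ i : Fin K, (TI i)ᴴ * TQ i + (TQ i)ᴴ * TI i = 0) ↔ (α = β ∨ α = -β)) := by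
  have key : ∀ i : Fin K,
      ((α:ℂ) • AI i + (β:ℂ) • AQ i)ᴴ * ((α:ℂ) • AI i - (β:ℂ) • AQ i) +
        ((α:ℂ) • AI i - (β:ℂ) • AQ i)ᴴ * ((α:ℂ) • AI i + (β:ℂ) • AQ i) =
      ((2 * (α ^ 2 - β ^ 2) : ℝ) : ℂ) • (1 : Matrix (Fin n) (Fin n) ℂ) := by
    intro i
    have h1 := hUI i
    have h2 := hUQ i
    simp only [conjTranspose_add, conjTranspose_sub, conjTranspose_smul,
      Complex.star_def, Complex.conj_ofReal]
    rw [add_mul, sub_mul, mul_sub, mul_sub, mul_add, mul_add]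
    simp only [smul_mul_assoc, mul_smul_comm, h1, h2, smul_smul]
    push_cast
    module
  refine ⟨key, ?_, ?_⟩
  · intro h
    have h0 := (key ⟨0, hK⟩).symm.trans (h ⟨0, hK⟩)
    have hc : ((2 * (α ^ 2 - β ^ 2) : ℝ) : ℂ) = 0 := by
      have := congr_fun (congr_fun h0 ⟨0, hn⟩) ⟨0, hn⟩
      simpa [Matrix.smul_apply, Matrix.one_apply] using this
    have hsq : α ^ 2 = β ^ 2 := by
      have h2 : (2 : ℝ) * (α ^ 2 - β ^ 2) = 0 := by exact_mod_cast hc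
      nlinarith
    exact sq_eq_sq_iff_eq_or_eq_neg.mp hsq
  · intro h i
    rw [key i]
    rcases h with h | h <;> simp [h]
end

section
/- Let A_1,…,A_K be n×n complex matrices that are skew-Hermitian (A_iᴴ = −A_i) and pairwise anticommuting (A_iA_j = −A_jA_i for i ≠ j), and let P be an n×n Hermitian unitary complex matrix anticommuting with every A_i (PA_i = −A_iP for all i = 1,…,K). Define A_{iI} = A_i and A_{iQ} = P·A_i for 1 ≤ i ≤ K. Then the family (A_{iI}, A_{iQ})_{i=1}^K satisfies the SSD conditions; i.e., the resulting (Minkowski-Clifford) unitary-weight code is single-symbol decodable. -/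
open Matrix

/-- The Minkowski-Clifford construction: skew-Hermitian pairwise anticommuting
matrices `A_i` together with a Hermitian unitary `P` anticommuting with all of
them yield a single-symbol decodable family via `A_{iI} = A_i`,
`A_{iQ} = P A_i`. -/
theorem minkowski_clifford_is_ssd {n K : ℕ}
    (A : Fin K → Matrix (Fin n) (Fin n) ℂ)
    (hAs : ∀ i, (A i)ᴴ = -(A i))
    (hAa : ∀ i j, i ≠ j → A i * A j = -(A j * A i))
    (P : Matrix (Fin n) (Fin n) ℂ)
    (hPh : Pᴴ = P) (hPu : Pᴴ * P = 1)
    (hPa : ∀ i, P * A i = -(A i * P)) :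
    SSDConds A (fun i => P * A i) := by
  intro i j hij
  refine ⟨?_, ?_, ?_⟩
  · have h1 : (A i)ᴴ * (P * A j) = A i * A j * P := by
      rw [hAs i, hPa j]
      noncomm_ring
    have h2 : (P * A j)ᴴ * A i = A j * A i * P := by
      rw [conjTranspose_mul, hAs j, hPh]
      have := hPa i
      calc -A j * P * A i = -(A j * (P * A i)) := by noncomm_ring
        _ = A j * A i * P := by rw [this]; noncomm_ring
    rw [h1, h2, ← add_mul, hAa i j hij]
    simp
  · rw [hAs i, hAs j]
    have := hAa i j hij
    calc -A i * A j + -A j * A i = -(A i * A j) + -(A j * A i) := by noncomm_ring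
      _ = 0 := by rw [this]; simp
  · show (P * A i)ᴴ * (P * A j) + (P * A j)ᴴ * (P * A i) = 0
    rw [conjTranspose_mul, conjTranspose_mul, hPh, hAs i, hAs j]
    have hp : P * P = 1 := by rw [← hPu, hPh]
    have h1 : -A i * P * (P * A j) = -(A i * A j) := by
      calc -A i * P * (P * A j) = -(A i * (P * P) * A j) := by noncomm_ring
        _ = -(A i * A j) := by rw [hp]; simp
    have h2 : -A j * P * (P * A i) = -(A j * A i) := by
      calc -A j * P * (P * A i) = -(A j * (P * P) * A i) := by noncomm_ring
        _ = -(A j * A i) := by rw [hp]; simp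
    rw [h1, h2, hAa i j hij]
    simp
end

section
/- For every integer a ≥ 1 there exist 2a complex matrices A_1,…,A_{2a} of size 2^a × 2^a that are unitary, skew-Hermitian, and pairwise anticommuting, together with a 2^a × 2^a Hermitian unitary matrix P satisfying P·A_i = −A_i·P for every i = 1,…,2a. Consequently, for every a ≥ 1 there exists a 2^a × 2^a unitary-weight single-symbol-decodable code in 2a complex variables (the MCUW-SSD code), of rate a/2^{a−1}. -/
open Matrix

open Kronecker

/-- Goodness of a family indexed by an arbitrary type. -/
def GoodFam {ι I : Type} [Fintype I] [DecidableEq I]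
    (A : ι → Matrix I I ℂ) (P : Matrix I I ℂ) : Prop :=
  (∀ i, (A i)ᴴ * A i = 1) ∧
  (∀ i, (A i)ᴴ = -(A i)) ∧
  (∀ i j, i ≠ j → A i * A j = -(A j * A i)) ∧
  Pᴴ = P ∧
  Pᴴ * P = 1 ∧
  (∀ i, P * A i = -(A i * P))

lemma kron_conjT {l m n p : Type} [Fintype l] [Fintype m] [Fintype n] [Fintype p]
    (A : Matrix l m ℂ) (B : Matrix n p ℂ) : (A ⊗ₖ B)ᴴ = Aᴴ ⊗ₖ Bᴴ := by
  ext ⟨i, j⟩ ⟨k, l⟩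
  simp [conjTranspose_apply, kroneckerMap_apply, mul_comm]

lemma kron_neg {l m n p : Type}
    (A : Matrix l m ℂ) (B : Matrix n p ℂ) : A ⊗ₖ (-B) = -(A ⊗ₖ B) := by
  ext ⟨i, j⟩ ⟨k, l⟩
  simp [kroneckerMap_apply]

-- Pauli-type 2×2 matrices
noncomputable def mX : Matrix (Fin 2) (Fin 2) ℂ := !![0, Complex.I; Complex.I, 0]
noncomputable def mY : Matrix (Fin 2) (Fin 2) ℂ := !![0, 1; -1, 0]
noncomputable def mZ : Matrix (Fin 2) (Fin 2) ℂ := !![1, 0; 0, -1]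

lemma kron_negl {l m n p : Type}
    (A : Matrix l m ℂ) (B : Matrix n p ℂ) : (-A) ⊗ₖ B = -(A ⊗ₖ B) := by
  ext ⟨i, j⟩ ⟨k, l⟩
  simp [kroneckerMap_apply]

lemma mX_conjT : mXᴴ = -mX := by
  ext i j; fin_cases i <;> fin_cases j <;> simp [mX, conjTranspose_apply]

lemma mY_conjT : mYᴴ = -mY := by
  ext i j; fin_cases i <;> fin_cases j <;> simp [mY, conjTranspose_apply]

lemma mZ_conjT : mZᴴ = mZ := by
  ext i j; fin_cases i <;> fin_cases j <;> simp [mZ, conjTranspose_apply]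

lemma mX_sq : mX * mX = -1 := by
  ext i j; fin_cases i <;> fin_cases j <;>
    simp [mX, Matrix.mul_apply, Fin.sum_univ_two, Complex.I_mul_I, Matrix.one_apply]

lemma mY_sq : mY * mY = -1 := by
  ext i j; fin_cases i <;> fin_cases j <;>
    simp [mY, Matrix.mul_apply, Fin.sum_univ_two, Matrix.one_apply]

lemma mZ_sq : mZ * mZ = 1 := by
  ext i j; fin_cases i <;> fin_cases j <;>
    simp [mZ, Matrix.mul_apply, Fin.sum_univ_two, Matrix.one_apply]

lemma mXY : mX * mY = -(mY * mX) := by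
  ext i j; fin_cases i <;> fin_cases j <;>
    simp [mX, mY, Matrix.mul_apply, Fin.sum_univ_two]

lemma mZX : mZ * mX = -(mX * mZ) := by
  ext i j; fin_cases i <;> fin_cases j <;>
    simp [mX, mZ, Matrix.mul_apply, Fin.sum_univ_two]

lemma mZY : mZ * mY = -(mY * mZ) := by
  ext i j; fin_cases i <;> fin_cases j <;>
    simp [mY, mZ, Matrix.mul_apply, Fin.sum_univ_two]

lemma base_good : GoodFam (fun b : Bool => if b then mX else mY) mZ := by
  have hXu : mXᴴ * mX = 1 := by rw [mX_conjT, neg_mul, mX_sq, neg_neg]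
  have hYu : mYᴴ * mY = 1 := by rw [mY_conjT, neg_mul, mY_sq, neg_neg]
  refine ⟨?_, ?_, ?_, mZ_conjT, by rw [mZ_conjT, mZ_sq], ?_⟩
  · rintro (_ | _) <;> simpa using (by first | exact hXu | exact hYu)
  · rintro (_ | _) <;> simp [mX_conjT, mY_conjT]
  · rintro (_ | _) (_ | _) h <;> simp at h ⊢ <;>
      first | exact mXY | (rw [mXY]; simp)
  · rintro (_ | _) <;> simp [mZX, mZY]

/-- The inductive step of the Clifford-matrix construction. -/
lemma step_good {ι I : Type} [Fintype I] [DecidableEq I]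
    {A : ι → Matrix I I ℂ} {P : Matrix I I ℂ} (h : GoodFam A P) :
    GoodFam (Sum.elim (fun i => (1 : Matrix (Fin 2) (Fin 2) ℂ) ⊗ₖ A i)
        (fun b : Bool => if b then mX ⊗ₖ P else mY ⊗ₖ P)) (mZ ⊗ₖ P) := by
  obtain ⟨hu, hs, hac, hPh, hPu, hPa⟩ := h
  have hP2 : P * P = 1 := by nth_rewrite 1 [← hPh]; exact hPu
  have hYX : mY * mX = -(mX * mY) := by rw [mXY, neg_neg]
  have hXZ : mX * mZ = -(mZ * mX) := by rw [mZX, neg_neg]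
  have hYZ : mY * mZ = -(mZ * mY) := by rw [mZY, neg_neg]
  refine ⟨?_, ?_, ?_, ?_, ?_, ?_⟩
  · rintro (i | b)
    · simp [kron_conjT, ← mul_kronecker_mul, hu, one_kronecker_one]
    · cases b <;>
        simp [kron_conjT, hPh, mX_conjT, mY_conjT, ← mul_kronecker_mul,
          kron_negl, mX_sq, mY_sq, hP2, one_kronecker_one]
  · rintro (i | b)
    · simp [kron_conjT, hs, kron_neg]
    · cases b <;> simp [kron_conjT, hPh, mX_conjT, mY_conjT, kron_negl]
  · rintro (i | b) (j | c) hij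
    · have hij' : i ≠ j := by simpa using hij
      simp [← mul_kronecker_mul, hac i j hij', kron_neg]
    · cases c <;> simp [← mul_kronecker_mul, hPa, kron_neg]
    · cases b <;> simp [← mul_kronecker_mul, hPa, kron_neg]
    · rcases b <;> rcases c
      · exact absurd rfl hij
      · show mY ⊗ₖ P * (mX ⊗ₖ P) = -(mX ⊗ₖ P * (mY ⊗ₖ P))
        rw [← mul_kronecker_mul, ← mul_kronecker_mul, hYX, kron_negl]
      · show mX ⊗ₖ P * (mY ⊗ₖ P) = -(mY ⊗ₖ P * (mX ⊗ₖ P))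
        rw [← mul_kronecker_mul, ← mul_kronecker_mul, mXY, kron_negl]
      · exact absurd rfl hij
  · rw [kron_conjT, hPh, mZ_conjT]
  · rw [kron_conjT, hPh, mZ_conjT, ← mul_kronecker_mul, mZ_sq, hP2, one_kronecker_one]
  · rintro (i | b)
    · simp [← mul_kronecker_mul, hPa, kron_neg]
    · cases b <;> simp [← mul_kronecker_mul, hP2, mZX, mZY, kron_negl]

lemma aux_good (a : ℕ) (ha : 1 ≤ a) :
    ∃ (ι I : Type) (_ : Fintype ι) (_ : Fintype I) (_ : DecidableEq I)
      (A : ι → Matrix I I ℂ) (P : Matrix I I ℂ),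
      Fintype.card ι = 2 * a ∧ Fintype.card I = 2 ^ a ∧ GoodFam A P := by
  induction a, ha using Nat.le_induction with
  | base =>
    exact ⟨Bool, Fin 2, inferInstance, inferInstance, inferInstance,
      (fun b : Bool => if b then mX else mY), mZ, by simp, by simp, base_good⟩
  | succ n hn ih =>
    obtain ⟨ι, I, _, _, _, A, P, hcι, hcI, h⟩ := ih
    refine ⟨ι ⊕ Bool, Fin 2 × I, inferInstance, inferInstance, inferInstance, _, _,
      ?_, ?_, step_good h⟩
    · simp [hcι]; ring
    · simp [hcI]; ring

/-- For every `a ≥ 1` there exist `2a` unitary skew-Hermitian pairwise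
anticommuting `2^a × 2^a` matrices together with a Hermitian unitary matrix `P`
anticommuting with all of them; the resulting Minkowski-Clifford weight
matrices `A_{iI} = A_i`, `A_{iQ} = P A_i` give a unitary-weight single-symbol
decodable code in `2a` complex variables, i.e. of rate `a/2^(a-1)`. -/
theorem exists_mcuw_ssd_code (a : ℕ) (ha : 1 ≤ a) :
    ∃ (A : Fin (2 * a) → Matrix (Fin (2 ^ a)) (Fin (2 ^ a)) ℂ)
      (P : Matrix (Fin (2 ^ a)) (Fin (2 ^ a)) ℂ),
      (∀ i, (A i)ᴴ * A i = 1) ∧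
      (∀ i, (A i)ᴴ = -(A i)) ∧
      (∀ i j, i ≠ j → A i * A j = -(A j * A i)) ∧
      Pᴴ = P ∧
      Pᴴ * P = 1 ∧
      (∀ i, P * A i = -(A i * P)) ∧
      SSDConds A (fun i => P * A i) := by
  obtain ⟨ι, I, _, _, _, A, P, hcι, hcI, hu, hs, hac, hPh, hPu, hPa⟩ := aux_good a ha
  let eι : Fin (2 * a) ≃ ι := (Fintype.equivFinOfCardEq hcι).symm
  let eI : Fin (2 ^ a) ≃ I := (Fintype.equivFinOfCardEq hcI).symm
  let R : Matrix I I ℂ ≃ₐ[ℂ] Matrix (Fin (2 ^ a)) (Fin (2 ^ a)) ℂ :=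
    Matrix.reindexAlgEquiv ℂ ℂ eI.symm
  have hRct : ∀ M : Matrix I I ℂ, (R M)ᴴ = R Mᴴ := by
    intro M; simp [R, Matrix.conjTranspose_reindex]
  refine ⟨fun i => R (A (eι i)), R P, ?_, ?_, ?_, ?_, ?_, ?_, ?_⟩
  · intro i; beta_reduce; rw [hRct, ← _root_.map_mul, hu, _root_.map_one]
  · intro i; beta_reduce; rw [hRct, hs, _root_.map_neg]
  · intro i j hij
    beta_reduce
    have : eι i ≠ eι j := fun h => hij (eι.injective h)
    rw [← _root_.map_mul, hac _ _ this, _root_.map_neg, _root_.map_mul]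
  · rw [hRct, hPh]
  · rw [hRct, ← _root_.map_mul, hPu, _root_.map_one]
  · intro i; beta_reduce; rw [← _root_.map_mul, hPa, _root_.map_neg, _root_.map_mul]
  · intro i j hij
    beta_reduce
    have hij' : eι i ≠ eι j := fun h => hij (eι.injective h)
    set X := R (A (eι i)) with hXdef
    set Y := R (A (eι j)) with hYdef
    set Q := R P with hQdef
    have e1 : Xᴴ = -X := by rw [hXdef, hRct, hs, _root_.map_neg]
    have e1' : Yᴴ = -Y := by rw [hYdef, hRct, hs, _root_.map_neg]
    have hQh : Qᴴ = Q := by rw [hQdef, hRct, hPh]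
    have hQ2 : Q * Q = 1 := by
      rw [hQdef, ← _root_.map_mul]
      nth_rewrite 1 [← hPh]
      rw [hPu, _root_.map_one]
    have hQX : Q * X = -(X * Q) := by
      rw [hQdef, hXdef, ← _root_.map_mul, hPa, _root_.map_neg, _root_.map_mul]
    have hQY : Q * Y = -(Y * Q) := by
      rw [hQdef, hYdef, ← _root_.map_mul, hPa, _root_.map_neg, _root_.map_mul]
    have hXY : X * Y = -(Y * X) := by
      rw [hXdef, hYdef, ← _root_.map_mul, hac _ _ hij', _root_.map_neg, _root_.map_mul]
    have hXQ : X * Q = -(Q * X) := by rw [hQX, neg_neg]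
    have hYQ : Y * Q = -(Q * Y) := by rw [hQY, neg_neg]
    have hQYs : (Q * Y)ᴴ = -Y * Q := by rw [conjTranspose_mul, e1', hQh, neg_mul]
    have hQXs : (Q * X)ᴴ = -X * Q := by rw [conjTranspose_mul, e1, hQh, neg_mul]
    refine ⟨?_, ?_, ?_⟩
    · have t1 : X * (Q * Y) = Q * (Y * X) := by
        calc X * (Q * Y) = X * Q * Y := by rw [mul_assoc]
        _ = -(Q * X) * Y := by rw [hXQ]
        _ = -(Q * (X * Y)) := by rw [neg_mul, mul_assoc]
        _ = -(Q * -(Y * X)) := by rw [hXY]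
        _ = Q * (Y * X) := by rw [mul_neg, neg_neg]
      have t2 : Y * Q * X = -(Q * (Y * X)) := by rw [hYQ, neg_mul, mul_assoc]
      rw [e1, hQYs]
      simp only [neg_mul]
      rw [t1, t2, neg_neg, neg_add_cancel]
    · rw [e1, e1', neg_mul, neg_mul, hXY, neg_neg, add_neg_cancel]
    · have t3 : -X * Q * (Q * Y) = -(X * Y) := by
        rw [neg_mul, neg_mul, mul_assoc, ← mul_assoc Q Q Y, hQ2, one_mul]
      have t4 : -Y * Q * (Q * X) = -(Y * X) := by
        rw [neg_mul, neg_mul, mul_assoc, ← mul_assoc Q Q X, hQ2, one_mul]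
      rw [hQXs, hQYs, t3, t4, hXY, neg_neg, add_neg_cancel]
end

section
/- Let (A_{iI}, A_{iQ})_{i=1}^K be n×n complex matrices, all unitary, with A_{1I} = I_n, satisfying the SSD conditions, and set A'_{iQ} = A_{1Q}ᴴ A_{iQ} for each i. Then: (i) A_{iI}ᴴ = −A_{iI} for 2 ≤ i ≤ K; (ii) A_{iI}A_{jI} = −A_{jI}A_{iI} for 2 ≤ i ≠ j ≤ K; (iii) A'_{iQ}ᴴ = −A'_{iQ} for 2 ≤ i ≤ K; and (iv) A'_{iQ}A'_{jQ} = −A'_{jQ}A'_{iQ} for 2 ≤ i ≠ j ≤ K. In particular, the matrices {A_{iI}}_{i=2}^K and {A'_{iQ}}_{i=2}^K each form Hurwitz–Radon families of unitary, skew-Hermitian, pairwise anticommuting matrices. -/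
open Matrix

/-- For a normalized unitary-weight SSD family, the matrices
`{A_{iI}}_{i ≥ 2}` and `{A'_{iQ} = A_{1Q}ᴴ A_{iQ}}_{i ≥ 2}` are skew-Hermitian
and pairwise anticommuting (hence, being unitary, each forms a Hurwitz–Radon
family). -/
theorem uw_ssd_hurwitz_radon_families {n K : ℕ} (hK : 0 < K)
    (AI AQ : Fin K → Matrix (Fin n) (Fin n) ℂ)
    (hUI : ∀ i, (AI i)ᴴ * AI i = 1)
    (hUQ : ∀ i, (AQ i)ᴴ * AQ i = 1)
    (h1 : AI ⟨0, hK⟩ = 1)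
    (hSSD : SSDConds AI AQ) :
    letI A'Q : Fin K → Matrix (Fin n) (Fin n) ℂ := fun i => (AQ ⟨0, hK⟩)ᴴ * AQ i
    (∀ i : Fin K, i ≠ ⟨0, hK⟩ → (AI i)ᴴ = -(AI i)) ∧
    (∀ i j : Fin K, i ≠ ⟨0, hK⟩ → j ≠ ⟨0, hK⟩ → i ≠ j → AI i * AI j = -(AI j * AI i)) ∧
    (∀ i : Fin K, i ≠ ⟨0, hK⟩ → (A'Q i)ᴴ = -(A'Q i)) ∧
    (∀ i j : Fin K, i ≠ ⟨0, hK⟩ → j ≠ ⟨0, hK⟩ → i ≠ j →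
      A'Q i * A'Q j = -(A'Q j * A'Q i)) := by
  have hQ0 : AQ ⟨0, hK⟩ * (AQ ⟨0, hK⟩)ᴴ = 1 := mul_eq_one_comm.mp (hUQ _)
  have skewI : ∀ i : Fin K, i ≠ ⟨0, hK⟩ → (AI i)ᴴ = -(AI i) := by
    intro i hi
    have h := (hSSD i ⟨0, hK⟩ hi).2.1
    rw [h1, conjTranspose_one, mul_one, one_mul] at h
    exact eq_neg_of_add_eq_zero_left h
  have skewQ : ∀ i : Fin K, i ≠ ⟨0, hK⟩ →
      ((AQ ⟨0, hK⟩)ᴴ * AQ i)ᴴ = -((AQ ⟨0, hK⟩)ᴴ * AQ i) := by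
    intro i hi
    have h := (hSSD i ⟨0, hK⟩ hi).2.2
    have h' : ((AQ ⟨0, hK⟩)ᴴ * AQ i)ᴴ + (AQ ⟨0, hK⟩)ᴴ * AQ i = 0 := by
      rw [conjTranspose_mul, conjTranspose_conjTranspose]
      exact h
    exact eq_neg_of_add_eq_zero_left h'
  refine ⟨skewI, ?_, skewQ, ?_⟩
  · intro i j hi hj hij
    have h := (hSSD i j hij).2.1
    rw [skewI i hi, skewI j hj, neg_mul, neg_mul] at h
    have h' : AI i * AI j + AI j * AI i = 0 := by
      have := congrArg Neg.neg h
      simpa [neg_add, add_comm] using this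
    exact eq_neg_of_add_eq_zero_left h'
  · intro i j hi hj hij
    have h := (hSSD i j hij).2.2
    have key : ((AQ ⟨0, hK⟩)ᴴ * AQ i)ᴴ * ((AQ ⟨0, hK⟩)ᴴ * AQ j)
        + ((AQ ⟨0, hK⟩)ᴴ * AQ j)ᴴ * ((AQ ⟨0, hK⟩)ᴴ * AQ i) = 0 := by
      rw [conjTranspose_mul, conjTranspose_mul, conjTranspose_conjTranspose]
      calc (AQ i)ᴴ * AQ ⟨0, hK⟩ * ((AQ ⟨0, hK⟩)ᴴ * AQ j)
          + (AQ j)ᴴ * AQ ⟨0, hK⟩ * ((AQ ⟨0, hK⟩)ᴴ * AQ i)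
          = (AQ i)ᴴ * (AQ ⟨0, hK⟩ * (AQ ⟨0, hK⟩)ᴴ) * AQ j
          + (AQ j)ᴴ * (AQ ⟨0, hK⟩ * (AQ ⟨0, hK⟩)ᴴ) * AQ i := by noncomm_ring
        _ = (AQ i)ᴴ * AQ j + (AQ j)ᴴ * AQ i := by rw [hQ0, mul_one, mul_one]
        _ = 0 := h
    rw [skewQ i hi, skewQ j hj, neg_mul, neg_mul] at key
    have h' : ((AQ ⟨0, hK⟩)ᴴ * AQ i) * ((AQ ⟨0, hK⟩)ᴴ * AQ j)
        + ((AQ ⟨0, hK⟩)ᴴ * AQ j) * ((AQ ⟨0, hK⟩)ᴴ * AQ i) = 0 := by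
      have := congrArg Neg.neg key
      simpa [neg_add, add_comm] using this
    exact eq_neg_of_add_eq_zero_left h'
end

section
/- Let A be an n×n complex Hermitian unitary matrix that is not a scalar multiple of I_n, and let α, β be nonzero real numbers. Then the matrix α·I_n + β·A satisfies (α·I_n + β·A)ᴴ(α·I_n + β·A) = (α² + β²)·I_n + 2αβ·A, and in particular α·I_n + β·A is not unitary. Consequently, the Transformed Non-Unitary code obtained from a unitary-weight SSD code with non-scalar discriminant A_{1Q} via T_{iI} = αA_{iI} + βA_{iQ}, T_{iQ} = αA_{iI} − βA_{iQ} has non-unitary weight matrices. -/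
open Matrix

/-- For a Hermitian unitary non-scalar matrix `A` and nonzero reals `α, β`,
`(αI + βA)ᴴ(αI + βA) = (α² + β²)I + 2αβ A`, and `αI + βA` is not unitary.
Hence Transformed Non-Unitary codes have non-unitary weight matrices. -/
theorem transformed_weight_not_unitary {n : ℕ}
    (A : Matrix (Fin n) (Fin n) ℂ)
    (hAh : Aᴴ = A) (hAu : Aᴴ * A = 1)
    (hAns : ¬ ∃ c : ℂ, A = c • (1 : Matrix (Fin n) (Fin n) ℂ))
    (α β : ℝ) (hα : α ≠ 0) (hβ : β ≠ 0) :
    letI M : Matrix (Fin n) (Fin n) ℂ := (α : ℂ) • (1 : Matrix (Fin n) (Fin n) ℂ) + (β : ℂ) • A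
    Mᴴ * M = ((α ^ 2 + β ^ 2 : ℝ) : ℂ) • (1 : Matrix (Fin n) (Fin n) ℂ)
        + ((2 * α * β : ℝ) : ℂ) • A ∧
      Mᴴ * M ≠ 1 := by
  set M : Matrix (Fin n) (Fin n) ℂ := (α : ℂ) • (1 : Matrix (Fin n) (Fin n) ℂ) + (β : ℂ) • A with hM
  have hAA : A * A = 1 := by rw [hAh] at hAu; exact hAu
  have hMh : Mᴴ = M := by
    simp [hM, conjTranspose_add, conjTranspose_smul, hAh, Complex.star_def,
      Complex.conj_ofReal]
  have key : Mᴴ * M = ((α ^ 2 + β ^ 2 : ℝ) : ℂ) • (1 : Matrix (Fin n) (Fin n) ℂ)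
      + ((2 * α * β : ℝ) : ℂ) • A := by
    rw [hMh]
    simp only [hM, add_mul, mul_add, smul_mul_assoc, mul_smul_comm, one_mul, mul_one, hAA,
      smul_smul]
    push_cast
    module
  refine ⟨key, ?_⟩
  intro h1
  rw [key] at h1
  apply hAns
  have hab : ((2 * α * β : ℝ) : ℂ) ≠ 0 := by
    simp [hα, hβ]
  refine ⟨((1 - (α ^ 2 + β ^ 2 : ℝ) : ℂ)) / ((2 * α * β : ℝ) : ℂ), ?_⟩
  have : ((2 * α * β : ℝ) : ℂ) • A =
      (1 - ((α ^ 2 + β ^ 2 : ℝ) : ℂ)) • (1 : Matrix (Fin n) (Fin n) ℂ) := by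
    rw [sub_smul, one_smul]
    exact eq_sub_of_add_eq' h1
  calc A = (((2 * α * β : ℝ) : ℂ)⁻¹ * ((2 * α * β : ℝ) : ℂ)) • A := by
          rw [inv_mul_cancel₀ hab, one_smul]
    _ = ((2 * α * β : ℝ) : ℂ)⁻¹ • (((2 * α * β : ℝ) : ℂ) • A) := by rw [smul_smul]
    _ = _ := by rw [this, smul_smul, div_eq_inv_mul]
end
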